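/- arXiv:2309.13324 — 6 statements merged into one kernel-verified Lean document; each statement's English description precedes it below -/
import Mathlib

section
/- Define the pseudo outcome φ := ((2A−1)/g(A))·(Y − Q̄(A)) + Q̄₁ − Q̄₀. Then E[φ | 𝒢_W] = τ almost surely; i.e., the pseudo outcome used by the DR-learner is conditionally unbiased for the conditional average treatment effect given the covariates. -/
open MeasureTheory ProbabilityTheory

/-- The DR-learner pseudo outcome
`φ := ((2A−1)/g(A))·(Y − Q̄(A)) + Q̄₁ − Q̄₀` satisfies `E[φ | 𝒢_W] = τ` a.s. -/
theorem pseudo_outcome_conditionally_unbiased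
    {Ω : Type*} (GW : MeasurableSpace Ω) (GAW : MeasurableSpace Ω) {mΩ : MeasurableSpace Ω} (P : Measure Ω) [IsProbabilityMeasure P]
    (hGW : GW ≤ mΩ)
    (A : Ω → ℝ) (hA : Measurable A) (hA01 : ∀ ω, A ω = 0 ∨ A ω = 1)
    (hGAW_def : GAW = GW ⊔ MeasurableSpace.comap A inferInstance) (hGAW : GAW ≤ mΩ)
    (Y : Ω → ℝ) (hY : Measurable Y) (hYbdd : ∃ C, ∀ ω, |Y ω| ≤ C)
    (Q1 Q0 : Ω → ℝ) (hQ1 : Measurable[GW] Q1) (hQ0 : Measurable[GW] Q0)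
    (hQ1bdd : ∃ C, ∀ ω, |Q1 ω| ≤ C) (hQ0bdd : ∃ C, ∀ ω, |Q0 ω| ≤ C)
    (hQ : P[Y | GAW] =ᵐ[P] fun ω => A ω * Q1 ω + (1 - A ω) * Q0 ω)
    (g1 : Ω → ℝ) (hg1 : g1 =ᵐ[P] P[A | GW]) (hg1meas : Measurable[GW] g1)
    (ε : ℝ) (hε : 0 < ε) (hε' : ε < 1 / 2)
    (hg1bdd : ∀ᵐ ω ∂P, ε ≤ g1 ω ∧ g1 ω ≤ 1 - ε) :
    P[fun ω =>
        ((2 * A ω - 1) / (A ω * g1 ω + (1 - A ω) * (1 - g1 ω)))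
          * (Y ω - (A ω * Q1 ω + (1 - A ω) * Q0 ω))
        + Q1 ω - Q0 ω | GW]
      =ᵐ[P] fun ω => Q1 ω - Q0 ω := by
  obtain ⟨CY, hCY⟩ := hYbdd
  obtain ⟨C1, hC1⟩ := hQ1bdd
  obtain ⟨C0, hC0⟩ := hQ0bdd
  have hGWle : GW ≤ GAW := hGAW_def ▸ le_sup_left
  set h : Ω → ℝ := fun ω => (2 * A ω - 1) / (A ω * g1 ω + (1 - A ω) * (1 - g1 ω)) with hh
  set Qb : Ω → ℝ := fun ω => A ω * Q1 ω + (1 - A ω) * Q0 ω with hQb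
  -- measurability facts
  have hA_GAW : Measurable[GAW] A := by
    rw [hGAW_def]; exact (comap_measurable A).mono le_sup_right le_rfl
  have hY_mΩ : Measurable[mΩ] Y := hY
  have hg1_GAW : Measurable[GAW] g1 := hg1meas.mono hGWle le_rfl
  have hg1_mΩ : Measurable[mΩ] g1 := hg1meas.mono hGW le_rfl
  have hQ1_mΩ : Measurable[mΩ] Q1 := hQ1.mono hGW le_rfl
  have hQ0_mΩ : Measurable[mΩ] Q0 := hQ0.mono hGW le_rfl
  have hh_GAW : Measurable[GAW] h := by
    exact ((measurable_const.mul hA_GAW).sub measurable_const).div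
      (((hA_GAW.mul hg1_GAW)).add
        ((measurable_const.sub hA_GAW).mul (measurable_const.sub hg1_GAW)))
  have hh_mΩ : Measurable[mΩ] h := hh_GAW.mono hGAW le_rfl
  have hQb_GAW : Measurable[GAW] Qb := by
    exact (hA_GAW.mul (hQ1.mono hGWle le_rfl)).add
      ((measurable_const.sub hA_GAW).mul (hQ0.mono hGWle le_rfl))
  have hQb_mΩ : Measurable[mΩ] Qb := hQb_GAW.mono hGAW le_rfl
  -- a helper for integrability of a.e.-bounded measurable functions
  have int_of_bdd : ∀ (f : Ω → ℝ) (C : ℝ), Measurable[mΩ] f → (∀ᵐ ω ∂P, |f ω| ≤ C) →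
      Integrable f P := fun f C hf hb =>
    memLp_one_iff_integrable.mp <| MemLp.of_bound hf.aestronglyMeasurable C <| by
      simpa [Real.norm_eq_abs] using hb
  -- bounds
  have hQb_bdd : ∀ ω, |Qb ω| ≤ max C1 C0 := by
    intro ω
    rcases hA01 ω with h0 | h1
    · simpa [hQb, h0] using (hC0 ω).trans (le_max_right _ _)
    · simpa [hQb, h1] using (hC1 ω).trans (le_max_left _ _)
  have hh_bdd : ∀ᵐ ω ∂P, |h ω| ≤ 1 / ε := by
    filter_upwards [hg1bdd] with ω ⟨hl, hu⟩
    have hε1 : (0:ℝ) < 1 - ε := by linarith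
    rcases hA01 ω with h0 | h1
    · have hd : (0:ℝ) < 1 - g1 ω := by linarith
      have : h ω = (-1) / (1 - g1 ω) := by simp [hh, h0]
      rw [this, abs_div, abs_of_pos hd]
      simp only [abs_neg, abs_one]
      rw [div_le_div_iff₀ hd hε]
      nlinarith
    · have hd : (0:ℝ) < g1 ω := lt_of_lt_of_le hε hl
      have : h ω = 1 / g1 ω := by simp [hh, h1]; norm_num
      rw [this, abs_div, abs_of_pos hd]
      simp only [abs_one]
      rw [div_le_div_iff₀ hd hε]
      nlinarith
  -- integrability
  have hint_Y : Integrable Y P := int_of_bdd Y CY hY_mΩ (Filter.Eventually.of_forall hCY)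
  have hint_Qb : Integrable Qb P :=
    int_of_bdd Qb (max C1 C0) hQb_mΩ (Filter.Eventually.of_forall hQb_bdd)
  have hint_sub : Integrable (fun ω => Y ω - Qb ω) P := hint_Y.sub hint_Qb
  have hint_prod : Integrable (fun ω => h ω * (Y ω - Qb ω)) P := by
    refine int_of_bdd _ ((1/ε) * (CY + max C1 C0)) (hh_mΩ.mul (hY_mΩ.sub hQb_mΩ)) ?_
    filter_upwards [hh_bdd] with ω hb
    rw [abs_mul]
    have h2 : |Y ω - Qb ω| ≤ CY + max C1 C0 :=
      (abs_sub (Y ω) (Qb ω)).trans (add_le_add (hCY ω) (hQb_bdd ω))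
    have hha : 0 ≤ |h ω| := abs_nonneg _
    have h3 : 0 ≤ |Y ω - Qb ω| := abs_nonneg _
    nlinarith
  have hint_tau : Integrable (fun ω => Q1 ω - Q0 ω) P := by
    refine int_of_bdd _ (C1 + C0) (hQ1_mΩ.sub hQ0_mΩ) (Filter.Eventually.of_forall fun ω => ?_)
    exact (abs_sub _ _).trans (add_le_add (hC1 ω) (hC0 ω))
  -- inner conditional expectation of Y - Qb is 0
  have hinner0 : P[fun ω => Y ω - Qb ω | GAW] =ᵐ[P] 0 := by
    have h1 : P[fun ω => Y ω - Qb ω | GAW] =ᵐ[P] P[Y | GAW] - P[Qb | GAW] := by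
      have := condExp_sub (m := GAW) (μ := P) hint_Y hint_Qb
      exact this
    have h2 : P[Qb | GAW] = Qb :=
      condExp_of_stronglyMeasurable hGAW hQb_GAW.stronglyMeasurable hint_Qb
    filter_upwards [h1, hQ] with ω hω1 hω2
    rw [hω1]
    simp only [Pi.sub_apply, Pi.zero_apply, h2]
    rw [hω2]
    simp [hQb]
  -- pull-out property
  have hmul : P[fun ω => h ω * (Y ω - Qb ω) | GAW] =ᵐ[P] 0 := by
    have hpull := condExp_mul_of_stronglyMeasurable_left (μ := P) hh_GAW.stronglyMeasurable
      hint_prod hint_sub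
    refine hpull.trans ?_
    filter_upwards [hinner0] with ω hω
    simp [hω]
  -- conditional expectation of φ given GAW
  have hphi : (fun ω => h ω * (Y ω - Qb ω) + Q1 ω - Q0 ω) =
      (fun ω => h ω * (Y ω - Qb ω)) + fun ω => Q1 ω - Q0 ω := by
    funext ω; simp; ring
  have hkey : P[fun ω => h ω * (Y ω - Qb ω) + Q1 ω - Q0 ω | GAW]
      =ᵐ[P] fun ω => Q1 ω - Q0 ω := by
    rw [hphi]
    have hadd := condExp_add (m := GAW) (μ := P) hint_prod hint_tau
    refine hadd.trans ?_
    have h2 : P[fun ω => Q1 ω - Q0 ω | GAW] = fun ω => Q1 ω - Q0 ω :=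
      condExp_of_stronglyMeasurable hGAW
        ((hQ1.mono hGWle le_rfl).sub (hQ0.mono hGWle le_rfl)).stronglyMeasurable hint_tau
    filter_upwards [hmul] with ω hω
    simp [hω, h2]
  -- tower property
  calc P[fun ω => h ω * (Y ω - Qb ω) + Q1 ω - Q0 ω | GW]
      =ᵐ[P] P[P[fun ω => h ω * (Y ω - Qb ω) + Q1 ω - Q0 ω | GAW] | GW] :=
        (condExp_condExp_of_le hGWle hGAW).symm
    _ =ᵐ[P] P[fun ω => Q1 ω - Q0 ω | GW] := condExp_congr_ae hkey
    _ =ᵐ[P] fun ω => Q1 ω - Q0 ω := by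
        rw [condExp_of_stronglyMeasurable (f := fun ω => Q1 ω - Q0 ω) hGW (hQ1.sub hQ0).stronglyMeasurable hint_tau]
end

section
/- Let ψ₂ := Var(τ) − Var(τ_s). Then the efficient influence curve of the treatment-effect variable importance measure has mean zero: E[ 2(τ − τ_s)·((2A−1)/g(A))·(Y − Q̄(A)) + (τ − τ_s)² − ψ₂ ] = 0. -/
open MeasureTheory ProbabilityTheory

lemma my_integrable_of_bdd {Ω : Type*} {m : MeasurableSpace Ω} {P : Measure Ω}
    [IsFiniteMeasure P] {f : Ω → ℝ} (hf : AEStronglyMeasurable f P) {C : ℝ}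
    (h : ∀ᵐ ω ∂P, |f ω| ≤ C) : Integrable f P :=
  memLp_one_iff_integrable.mp (MemLp.of_bound hf C (by simpa [Real.norm_eq_abs] using h))

/-- With `ψ₂ := Var(τ) − Var(τ_s)`, the efficient influence curve of the
treatment-effect variable importance measure has mean zero. -/
theorem eic_vim_mean_zero
    {Ω : Type*} (GW : MeasurableSpace Ω) (GAW : MeasurableSpace Ω) (G : MeasurableSpace Ω) {mΩ : MeasurableSpace Ω} (P : Measure Ω) [IsProbabilityMeasure P]
    (hGW : GW ≤ mΩ)
    (A : Ω → ℝ) (hA : Measurable A) (hA01 : ∀ ω, A ω = 0 ∨ A ω = 1)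
    (hGAW_def : GAW = GW ⊔ MeasurableSpace.comap A inferInstance) (hGAW : GAW ≤ mΩ)
    (Y : Ω → ℝ) (hY : Measurable Y) (hYbdd : ∃ C, ∀ ω, |Y ω| ≤ C)
    (Q1 Q0 : Ω → ℝ) (hQ1 : Measurable[GW] Q1) (hQ0 : Measurable[GW] Q0)
    (hQ1bdd : ∃ C, ∀ ω, |Q1 ω| ≤ C) (hQ0bdd : ∃ C, ∀ ω, |Q0 ω| ≤ C)
    (hQ : P[Y | GAW] =ᵐ[P] fun ω => A ω * Q1 ω + (1 - A ω) * Q0 ω)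
    (g1 : Ω → ℝ) (hg1 : g1 =ᵐ[P] P[A | GW]) (hg1meas : Measurable[GW] g1)
    (ε : ℝ) (hε : 0 < ε) (hε' : ε < 1 / 2)
    (hg1bdd : ∀ᵐ ω ∂P, ε ≤ g1 ω ∧ g1 ω ≤ 1 - ε)
    (hG : G ≤ GW) :
    ∫ ω,
        (2 * ((Q1 ω - Q0 ω) - (P[fun ω' => Q1 ω' - Q0 ω' | G]) ω)
          * ((2 * A ω - 1) / (A ω * g1 ω + (1 - A ω) * (1 - g1 ω)))
          * (Y ω - (A ω * Q1 ω + (1 - A ω) * Q0 ω))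
        + ((Q1 ω - Q0 ω) - (P[fun ω' => Q1 ω' - Q0 ω' | G]) ω) ^ 2
        - (variance (fun ω' => Q1 ω' - Q0 ω') P
            - variance (P[fun ω' => Q1 ω' - Q0 ω' | G]) P)) ∂P = 0 := by
  subst hGAW_def
  obtain ⟨C1, hC1⟩ := hQ1bdd
  obtain ⟨C0, hC0⟩ := hQ0bdd
  obtain ⟨CY, hCY⟩ := hYbdd
  replace hC1 : ∀ ω, |Q1 ω| ≤ |C1| := fun ω => (hC1 ω).trans (le_abs_self _)
  replace hC0 : ∀ ω, |Q0 ω| ≤ |C0| := fun ω => (hC0 ω).trans (le_abs_self _)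
  replace hCY : ∀ ω, |Y ω| ≤ |CY| := fun ω => (hCY ω).trans (le_abs_self _)
  have hGG : G ≤ mΩ := (hG.trans hGW)
  set τ : Ω → ℝ := fun ω => Q1 ω - Q0 ω with hτdef
  set τs : Ω → ℝ := P[τ | G] with hτsdef
  -- basic measurability
  have hYm : Measurable[mΩ] Y := hY
  have hτGW : Measurable[GW] τ := hQ1.sub hQ0
  have hτ : Measurable[mΩ] τ := hτGW.mono hGW le_rfl
  have hτs_sm : StronglyMeasurable[G] τs := stronglyMeasurable_condExp
  have hτs : Measurable[mΩ] τs := (hτs_sm.mono hGG).measurable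
  -- bounds
  set Cτ : ℝ := |C1| + |C0| with hCτdef
  have hCτ0 : 0 ≤ Cτ := by positivity
  have hτbdd : ∀ ω, |τ ω| ≤ Cτ := fun ω => (abs_sub (Q1 ω) (Q0 ω)).trans
    (add_le_add (hC1 ω) (hC0 ω))
  have hτbdd' : ∀ ω, |τ ω| ≤ (Cτ.toNNReal : ℝ) := fun ω =>
    (hτbdd ω).trans (Real.le_coe_toNNReal _)
  have hτsbdd : ∀ᵐ ω ∂P, |τs ω| ≤ (Cτ.toNNReal : ℝ) :=
    ae_bdd_condExp_of_ae_bdd (ae_of_all _ hτbdd')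
  have hCτeq : (Cτ.toNNReal : ℝ) = Cτ := Real.coe_toNNReal _ hCτ0
  rw [hCτeq] at hτsbdd
  -- the two parts of the integrand
  set den : Ω → ℝ := fun ω => A ω * g1 ω + (1 - A ω) * (1 - g1 ω) with hdendef
  set h : Ω → ℝ := fun ω => 2 * (τ ω - τs ω) * ((2 * A ω - 1) / den ω) with hhdef
  set Qbar : Ω → ℝ := fun ω => A ω * Q1 ω + (1 - A ω) * Q0 ω with hQbdef
  set g : Ω → ℝ := fun ω => Y ω - Qbar ω with hgdef
  have hGWle : GW ≤ GW ⊔ MeasurableSpace.comap A inferInstance := le_sup_left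
  have hAmeas : Measurable[GW ⊔ MeasurableSpace.comap A inferInstance] A :=
    measurable_iff_comap_le.mpr le_sup_right
  have hτGAW : Measurable[GW ⊔ MeasurableSpace.comap A inferInstance] τ :=
    hτGW.mono hGWle le_rfl
  have hτsGAW : Measurable[GW ⊔ MeasurableSpace.comap A inferInstance] τs :=
    (hτs_sm.mono (hG.trans hGWle)).measurable
  have hg1GAW : Measurable[GW ⊔ MeasurableSpace.comap A inferInstance] g1 :=
    hg1meas.mono hGWle le_rfl
  have hhGAW : Measurable[GW ⊔ MeasurableSpace.comap A inferInstance] h := by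
    apply Measurable.mul
    · exact (measurable_const.mul (hτGAW.sub hτsGAW))
    · exact ((measurable_const.mul hAmeas).sub measurable_const).div
        ((hAmeas.mul hg1GAW).add
          ((measurable_const.sub hAmeas).mul (measurable_const.sub hg1GAW)))
  have hhmeas : Measurable[mΩ] h := hhGAW.mono hGAW le_rfl
  have hQbGAW : Measurable[GW ⊔ MeasurableSpace.comap A inferInstance] Qbar :=
    (hAmeas.mul (hQ1.mono hGWle le_rfl)).add
      ((measurable_const.sub hAmeas).mul (hQ0.mono hGWle le_rfl))
  have hQbmeas : Measurable[mΩ] Qbar := hQbGAW.mono hGAW le_rfl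
  have hgmeas : Measurable[mΩ] g := hYm.sub hQbmeas
  -- bounds on h and g
  have hden : ∀ᵐ ω ∂P, ε ≤ den ω := by
    filter_upwards [hg1bdd] with ω hω
    rcases hA01 ω with h0 | h1
    · simp only [hdendef, h0]; ring_nf; linarith [hω.2]
    · simp only [hdendef, h1]; ring_nf; linarith [hω.1]
  have hhbdd : ∀ᵐ ω ∂P, |h ω| ≤ 2 * (2 * Cτ) * (1 / ε) := by
    filter_upwards [hden, hτsbdd] with ω hd hts
    have h1 : |2 * A ω - 1| = 1 := by rcases hA01 ω with ha | ha <;> rw [ha] <;> norm_num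
    have h2 : |(2 * A ω - 1) / den ω| ≤ 1 / ε := by
      rw [abs_div, h1]
      have : 0 < den ω := lt_of_lt_of_le hε hd
      rw [abs_of_pos this]
      exact one_div_le_one_div_of_le hε hd
    have h3 : |τ ω - τs ω| ≤ 2 * Cτ := by
      have := hτbdd ω
      calc |τ ω - τs ω| ≤ |τ ω| + |τs ω| := abs_sub _ _
        _ ≤ Cτ + Cτ := add_le_add this hts
        _ = 2 * Cτ := by ring
    calc |h ω| = 2 * |τ ω - τs ω| * |(2 * A ω - 1) / den ω| := by
          rw [hhdef]; rw [abs_mul, abs_mul, abs_two]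
      _ ≤ 2 * (2 * Cτ) * (1 / ε) := by
          apply mul_le_mul
          · exact mul_le_mul_of_nonneg_left h3 (by norm_num)
          · exact h2
          · exact abs_nonneg _
          · positivity
  have hgbdd : ∀ ω, |g ω| ≤ |CY| + (|C1| + |C0|) := by
    intro ω
    have hQb : |Qbar ω| ≤ |C1| + |C0| := by
      rcases hA01 ω with h0 | h1
      · simp only [hQbdef, h0]; ring_nf
        calc |Q0 ω| ≤ |C0| := hC0 ω
          _ ≤ |C1| + |C0| := by linarith [abs_nonneg C1]
      · simp only [hQbdef, h1]; ring_nf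
        calc |Q1 ω| ≤ |C1| := hC1 ω
          _ ≤ |C1| + |C0| := by linarith [abs_nonneg C0]
    calc |g ω| ≤ |Y ω| + |Qbar ω| := abs_sub _ _
      _ ≤ |CY| + (|C1| + |C0|) := add_le_add (hCY ω) hQb
  -- integrabilities
  have hg_int : Integrable g P :=
    my_integrable_of_bdd hgmeas.aestronglyMeasurable (ae_of_all _ hgbdd)
  have hhg_int : Integrable (h * g) P := by
    apply my_integrable_of_bdd ((hhmeas.mul hgmeas).aestronglyMeasurable)
      (C := (2 * (2 * Cτ) * (1 / ε)) * (|CY| + (|C1| + |C0|)))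
    filter_upwards [hhbdd] with ω hh
    have := mul_le_mul hh (hgbdd ω) (abs_nonneg _) (by positivity)
    calc |(h * g) ω| = |h ω| * |g ω| := by rw [Pi.mul_apply, abs_mul]
      _ ≤ _ := this
  have hY_int : Integrable Y P :=
    my_integrable_of_bdd hYm.aestronglyMeasurable (ae_of_all _ hCY)
  have hQb_int : Integrable Qbar P := by
    apply my_integrable_of_bdd hQbmeas.aestronglyMeasurable (C := |C1| + |C0|)
    filter_upwards with ω
    rcases hA01 ω with h0 | h1
    · simp only [hQbdef, h0]; ring_nf
      calc |Q0 ω| ≤ |C0| := hC0 ω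
        _ ≤ |C1| + |C0| := by linarith [abs_nonneg C1]
    · simp only [hQbdef, h1]; ring_nf
      calc |Q1 ω| ≤ |C1| := hC1 ω
        _ ≤ |C1| + |C0| := by linarith [abs_nonneg C0]
  -- Part 1: conditional expectation of g given GAW is 0
  have hQbar_sm : StronglyMeasurable[GW ⊔ MeasurableSpace.comap A inferInstance] Qbar :=
    hQbGAW.stronglyMeasurable
  have hcondQb : P[Qbar | GW ⊔ MeasurableSpace.comap A inferInstance] =ᵐ[P] Qbar := by
    rw [condExp_of_stronglyMeasurable hGAW hQbar_sm hQb_int]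
  have hcondg : P[g | GW ⊔ MeasurableSpace.comap A inferInstance] =ᵐ[P] 0 := by
    have hsub := condExp_sub (m := GW ⊔ MeasurableSpace.comap A inferInstance)
      (μ := P) hY_int hQb_int
    have : g = Y - Qbar := rfl
    rw [this]
    refine hsub.trans ?_
    filter_upwards [hQ, hcondQb] with ω h1 h2
    simp only [Pi.sub_apply, Pi.zero_apply, h1, h2]
    simp [hQbdef]
  have key1 : ∫ ω, h ω * g ω ∂P = 0 := by
    have step1 : ∫ ω, (h * g) ω ∂P = ∫ ω, (P[h * g | GW ⊔ MeasurableSpace.comap A inferInstance]) ω ∂P :=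
      (integral_condExp hGAW).symm
    have step2 : P[h * g | GW ⊔ MeasurableSpace.comap A inferInstance]
        =ᵐ[P] h * P[g | GW ⊔ MeasurableSpace.comap A inferInstance] :=
      condExp_mul_of_stronglyMeasurable_left hhGAW.stronglyMeasurable hhg_int hg_int
    have step3 : (h * P[g | GW ⊔ MeasurableSpace.comap A inferInstance] : Ω → ℝ) =ᵐ[P] 0 := by
      filter_upwards [hcondg] with ω hω
      simp [Pi.mul_apply, hω]
    calc ∫ ω, h ω * g ω ∂P = ∫ ω, (h * g) ω ∂P := rfl
      _ = ∫ ω, (P[h * g | GW ⊔ MeasurableSpace.comap A inferInstance]) ω ∂P := step1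
      _ = ∫ ω, (0 : Ω → ℝ) ω ∂P := integral_congr_ae (step2.trans step3)
      _ = 0 := by simp
  -- Part 2
  have hτ_int : Integrable τ P :=
    my_integrable_of_bdd hτ.aestronglyMeasurable (ae_of_all _ hτbdd)
  have hτs_int : Integrable τs P := integrable_condExp
  have hτ2 : MemLp τ 2 P :=
    MemLp.of_bound hτ.aestronglyMeasurable Cτ
      (by simpa [Real.norm_eq_abs] using ae_of_all P hτbdd)
  have hτs2 : MemLp τs 2 P :=
    MemLp.of_bound hτs.aestronglyMeasurable Cτ (by simpa [Real.norm_eq_abs] using hτsbdd)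
  have hττs_int : Integrable (τs * τ) P := by
    apply my_integrable_of_bdd (hτs.mul hτ).aestronglyMeasurable (C := Cτ * Cτ)
    filter_upwards [hτsbdd] with ω hts
    calc |(τs * τ) ω| = |τs ω| * |τ ω| := by rw [Pi.mul_apply, abs_mul]
      _ ≤ Cτ * Cτ := mul_le_mul hts (hτbdd ω) (abs_nonneg _) hCτ0
  have e1 : ∫ ω, τs ω * τ ω ∂P = ∫ ω, τs ω * τs ω ∂P := by
    have step1 : ∫ ω, (τs * τ) ω ∂P = ∫ ω, (P[τs * τ | G]) ω ∂P := (integral_condExp hGG).symm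
    have step2 : P[τs * τ | G] =ᵐ[P] τs * P[τ | G] :=
      condExp_mul_of_stronglyMeasurable_left hτs_sm hττs_int hτ_int
    calc ∫ ω, τs ω * τ ω ∂P = ∫ ω, (τs * τ) ω ∂P := rfl
      _ = ∫ ω, (P[τs * τ | G]) ω ∂P := step1
      _ = ∫ ω, (τs * P[τ | G]) ω ∂P := integral_congr_ae step2
      _ = ∫ ω, τs ω * τs ω ∂P := by rfl
  have eint : ∫ ω, τs ω ∂P = ∫ ω, τ ω ∂P := integral_condExp hGG
  -- integrability for expansion
  have hτsq_int : Integrable (fun ω => τ ω ^ 2) P := hτ2.integrable_sq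
  have hτssq_int : Integrable (fun ω => τs ω ^ 2) P := hτs2.integrable_sq
  have key2 : ∫ ω, (τ ω - τs ω) ^ 2 ∂P = variance τ P - variance τs P := by
    have expand : ∀ ω, (τ ω - τs ω) ^ 2 = τ ω ^ 2 - 2 * (τs ω * τ ω) + τs ω ^ 2 := by
      intro ω; ring
    have hmul_int : Integrable (fun ω => 2 * (τs ω * τ ω)) P := (hττs_int.const_mul 2)
    have hsub_int : Integrable (fun ω => τ ω ^ 2 - 2 * (τs ω * τ ω)) P := hτsq_int.sub hmul_int
    rw [show (fun ω => (τ ω - τs ω) ^ 2) = fun ω => τ ω ^ 2 - 2 * (τs ω * τ ω) + τs ω ^ 2 from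
      funext expand]
    rw [integral_add hsub_int hτssq_int, integral_sub hτsq_int hmul_int,
      integral_const_mul, e1, variance_eq_sub hτ2, variance_eq_sub hτs2]
    have : ∫ ω, τs ω * τs ω ∂P = ∫ ω, τs ω ^ 2 ∂P := by
      congr 1; funext ω; ring
    rw [this, eint]
    simp only [Pi.pow_apply]
    ring
  -- combine
  have hf1_int : Integrable (fun ω => h ω * g ω) P := hhg_int
  have hsq_int : Integrable (fun ω => (τ ω - τs ω) ^ 2) P := by
    apply my_integrable_of_bdd ((hτ.sub hτs).pow_const 2).aestronglyMeasurable
      (C := (2 * Cτ) ^ 2)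
    filter_upwards [hτsbdd] with ω hts
    have hb : |τ ω - τs ω| ≤ 2 * Cτ := by
      calc |τ ω - τs ω| ≤ |τ ω| + |τs ω| := abs_sub _ _
        _ ≤ Cτ + Cτ := add_le_add (hτbdd ω) hts
        _ = 2 * Cτ := by ring
    calc |(τ ω - τs ω) ^ 2| = |τ ω - τs ω| ^ 2 := by rw [abs_pow, sq_abs, ← sq_abs]
      _ ≤ (2 * Cτ) ^ 2 := pow_le_pow_left₀ (abs_nonneg _) hb 2
  show ∫ ω, (h ω * g ω + (τ ω - τs ω) ^ 2 - (variance τ P - variance τs P)) ∂P = 0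
  have hadd_int : Integrable (fun ω => h ω * g ω + (τ ω - τs ω) ^ 2) P := hf1_int.add hsq_int
  rw [integral_sub hadd_int (integrable_const _),
    integral_add hf1_int hsq_int, key1, key2, integral_const]
  simp
end

section
/- Define the pseudo outcome φ := ((2A−1)/g(A))·(Y − Q̄(A)) + Q̄₁ − Q̄₀. Then the population version of the estimating-equation estimator of the treatment-effect variable importance measure is unbiased: E[ (φ − τ_s)² − (φ − τ)² ] = Var(τ) − Var(τ_s). -/
open MeasureTheory ProbabilityTheory

private lemma memL2_of_bound {Ω : Type*} {mΩ : MeasurableSpace Ω} {P : Measure Ω}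
    [IsProbabilityMeasure P] {f : Ω → ℝ} (hf : AEStronglyMeasurable f P) (C : ℝ)
    (h : ∀ᵐ ω ∂P, |f ω| ≤ C) : MemLp f 2 P :=
  (memLp_top_of_bound hf C (by simpa [Real.norm_eq_abs] using h)).mono_exponent le_top

private lemma integrable_of_ae_bound {Ω : Type*} {mΩ : MeasurableSpace Ω} {P : Measure Ω}
    [IsProbabilityMeasure P] {f : Ω → ℝ} (hf : AEStronglyMeasurable f P) (C : ℝ)
    (h : ∀ᵐ ω ∂P, |f ω| ≤ C) : Integrable f P :=
  (memL2_of_bound hf C h).integrable one_le_two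

private lemma ee_abstract {Ω : Type*} {mΩ : MeasurableSpace Ω} (P : Measure Ω)
    [IsProbabilityMeasure P] (U τ τs : Ω → ℝ) (CU Cτ Cτs : ℝ)
    (hUm : AEStronglyMeasurable U P) (hτm : AEStronglyMeasurable τ P)
    (hτsm : AEStronglyMeasurable τs P)
    (hUb : ∀ᵐ ω ∂P, |U ω| ≤ CU) (hτb : ∀ᵐ ω ∂P, |τ ω| ≤ Cτ)
    (hτsb : ∀ᵐ ω ∂P, |τs ω| ≤ Cτs)
    (h1 : ∫ ω, U ω * (τ ω - τs ω) ∂P = 0)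
    (h2 : ∫ ω, τ ω * τs ω ∂P = ∫ ω, τs ω * τs ω ∂P)
    (h3 : ∫ ω, τs ω ∂P = ∫ ω, τ ω ∂P) :
    ∫ ω, ((U ω + τ ω - τs ω) ^ 2 - (U ω + τ ω - τ ω) ^ 2) ∂P
      = variance τ P - variance τs P := by
  have memτ : MemLp τ 2 P := memL2_of_bound hτm Cτ hτb
  have memτs : MemLp τs 2 P := memL2_of_bound hτsm Cτs hτsb
  have intτ : Integrable τ P := memτ.integrable one_le_two
  have intτs : Integrable τs P := memτs.integrable one_le_two
  have hτb' : ∀ᵐ ω ∂P, ‖τ ω‖ ≤ Cτ := by simpa [Real.norm_eq_abs] using hτb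
  have hτsb' : ∀ᵐ ω ∂P, ‖τs ω‖ ≤ Cτs := by simpa [Real.norm_eq_abs] using hτsb
  have hUb' : ∀ᵐ ω ∂P, ‖U ω‖ ≤ CU := by simpa [Real.norm_eq_abs] using hUb
  have intττ : Integrable (fun ω => τ ω * τ ω) P := intτ.bdd_mul hτm hτb'
  have intττs : Integrable (fun ω => τ ω * τs ω) P := intτs.bdd_mul hτm hτb'
  have intτsτs : Integrable (fun ω => τs ω * τs ω) P := intτs.bdd_mul hτsm hτsb'
  have intU1 : Integrable (fun ω => U ω * (τ ω - τs ω)) P :=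
    (intτ.sub intτs).bdd_mul hUm hUb'
  have hre : (fun ω => ((U ω + τ ω - τs ω) ^ 2 - (U ω + τ ω - τ ω) ^ 2))
      = fun ω => 2 * (U ω * (τ ω - τs ω))
          + (τ ω * τ ω - 2 * (τ ω * τs ω) + τs ω * τs ω) := by
    funext ω; ring
  have int2U : Integrable (fun ω => 2 * (U ω * (τ ω - τs ω))) P := intU1.const_mul 2
  have int2ττs : Integrable (fun ω => 2 * (τ ω * τs ω)) P := intττs.const_mul 2
  have intSub : Integrable (fun ω => τ ω * τ ω - 2 * (τ ω * τs ω)) P := by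
    exact intττ.sub int2ττs
  have intRest : Integrable (fun ω => τ ω * τ ω - 2 * (τ ω * τs ω) + τs ω * τs ω) P := by
    exact intSub.add intτsτs
  rw [hre, integral_add int2U intRest, integral_const_mul, h1,
    integral_add intSub intτsτs, integral_sub intττ int2ττs, integral_const_mul, h2]
  have hv1 : variance τ P = (∫ ω, τ ω * τ ω ∂P) - (∫ ω, τ ω ∂P) ^ 2 := by
    rw [variance_eq_sub memτ]
    congr 1
    exact integral_congr_ae (Filter.Eventually.of_forall fun ω => by simp [pow_two])
  have hv2 : variance τs P = (∫ ω, τs ω * τs ω ∂P) - (∫ ω, τs ω ∂P) ^ 2 := by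
    rw [variance_eq_sub memτs]
    congr 1
    exact integral_congr_ae (Filter.Eventually.of_forall fun ω => by simp [pow_two])
  rw [hv1, hv2, h3]
  ring

/-- The population estimating-equation for the VIM is unbiased:
`E[(φ − τ_s)² − (φ − τ)²] = Var(τ) − Var(τ_s)`, where
`φ := ((2A−1)/g(A))·(Y − Q̄(A)) + Q̄₁ − Q̄₀`. -/
theorem ee_vim_unbiased
    {Ω : Type*} (GW : MeasurableSpace Ω) (GAW : MeasurableSpace Ω) (G : MeasurableSpace Ω) {mΩ : MeasurableSpace Ω} (P : Measure Ω) [IsProbabilityMeasure P]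
    (hGW : GW ≤ mΩ)
    (A : Ω → ℝ) (hA : Measurable A) (hA01 : ∀ ω, A ω = 0 ∨ A ω = 1)
    (hGAW_def : GAW = GW ⊔ MeasurableSpace.comap A inferInstance) (hGAW : GAW ≤ mΩ)
    (Y : Ω → ℝ) (hY : Measurable Y) (hYbdd : ∃ C, ∀ ω, |Y ω| ≤ C)
    (Q1 Q0 : Ω → ℝ) (hQ1 : Measurable[GW] Q1) (hQ0 : Measurable[GW] Q0)
    (hQ1bdd : ∃ C, ∀ ω, |Q1 ω| ≤ C) (hQ0bdd : ∃ C, ∀ ω, |Q0 ω| ≤ C)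
    (hQ : P[Y | GAW] =ᵐ[P] fun ω => A ω * Q1 ω + (1 - A ω) * Q0 ω)
    (g1 : Ω → ℝ) (hg1 : g1 =ᵐ[P] P[A | GW]) (hg1meas : Measurable[GW] g1)
    (ε : ℝ) (hε : 0 < ε) (hε' : ε < 1 / 2)
    (hg1bdd : ∀ᵐ ω ∂P, ε ≤ g1 ω ∧ g1 ω ≤ 1 - ε)
    (hG : G ≤ GW) :
    ∫ ω,
        ((((2 * A ω - 1) / (A ω * g1 ω + (1 - A ω) * (1 - g1 ω)))
            * (Y ω - (A ω * Q1 ω + (1 - A ω) * Q0 ω))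
          + Q1 ω - Q0 ω - (P[fun ω' => Q1 ω' - Q0 ω' | G]) ω) ^ 2
        - (((2 * A ω - 1) / (A ω * g1 ω + (1 - A ω) * (1 - g1 ω)))
            * (Y ω - (A ω * Q1 ω + (1 - A ω) * Q0 ω))
          + Q1 ω - Q0 ω - (Q1 ω - Q0 ω)) ^ 2) ∂P
      = variance (fun ω => Q1 ω - Q0 ω) P
          - variance (P[fun ω => Q1 ω - Q0 ω | G]) P := by
  obtain ⟨CY₀, hCY₀⟩ := hYbdd
  obtain ⟨C1₀, hC1₀⟩ := hQ1bdd
  obtain ⟨C0₀, hC0₀⟩ := hQ0bdd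
  set CY := max CY₀ 0 with hCYdef
  set C1 := max C1₀ 0 with hC1def
  set C0 := max C0₀ 0 with hC0def
  have hCY : ∀ ω, |Y ω| ≤ CY := fun ω => (hCY₀ ω).trans (le_max_left _ _)
  have hC1 : ∀ ω, |Q1 ω| ≤ C1 := fun ω => (hC1₀ ω).trans (le_max_left _ _)
  have hC0 : ∀ ω, |Q0 ω| ≤ C0 := fun ω => (hC0₀ ω).trans (le_max_left _ _)
  have hCY0 : 0 ≤ CY := le_max_right _ _
  have hC10 : 0 ≤ C1 := le_max_right _ _
  have hC00 : 0 ≤ C0 := le_max_right _ _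
  have hGWle : GW ≤ GAW := by rw [hGAW_def]; exact le_sup_left
  have hGm : G ≤ mΩ := hG.trans hGW
  have hAG : Measurable[GAW] A := by
    rw [hGAW_def]; exact Measurable.of_comap_le le_sup_right
  have hAm : Measurable[mΩ] A := hA
  have hYm : Measurable[mΩ] Y := hY
  -- abbreviations
  set τ : Ω → ℝ := fun ω => Q1 ω - Q0 ω with hτdef
  set τs : Ω → ℝ := P[τ|G] with hτsdef
  set gA : Ω → ℝ := fun ω => A ω * g1 ω + (1 - A ω) * (1 - g1 ω) with hgAdef
  set c : Ω → ℝ := fun ω => (2 * A ω - 1) / gA ω with hcdef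
  set Qb : Ω → ℝ := fun ω => A ω * Q1 ω + (1 - A ω) * Q0 ω with hQbdef
  set U : Ω → ℝ := fun ω => c ω * (Y ω - Qb ω) with hUdef
  -- measurability under mΩ
  have hQ1m : Measurable[mΩ] Q1 := hQ1.mono hGW le_rfl
  have hQ0m : Measurable[mΩ] Q0 := hQ0.mono hGW le_rfl
  have hg1m : Measurable[mΩ] g1 := hg1meas.mono hGW le_rfl
  have hτm : Measurable[mΩ] τ := hQ1m.sub hQ0m
  have hτsm : @AEStronglyMeasurable Ω ℝ _ mΩ mΩ τs P :=
    (stronglyMeasurable_condExp.mono hGm).aestronglyMeasurable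
  have hgAm : Measurable[mΩ] gA := (hAm.mul hg1m).add ((measurable_const.sub hAm).mul
    (measurable_const.sub hg1m))
  have hcm : Measurable[mΩ] c := ((measurable_const.mul hAm).sub measurable_const).div hgAm
  have hQbm : Measurable[mΩ] Qb := (hAm.mul hQ1m).add ((measurable_const.sub hAm).mul hQ0m)
  have hUm : Measurable[mΩ] U := hcm.mul (hYm.sub hQbm)
  -- bounds
  have hcb : ∀ᵐ ω ∂P, |c ω| ≤ 1 / ε := by
    filter_upwards [hg1bdd] with ω hω
    rcases hA01 ω with h | h
    · have hgA : gA ω = 1 - g1 ω := by simp [hgAdef, h]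
      have hpos : ε ≤ 1 - g1 ω := by linarith [hω.2]
      have hc : c ω = (-1) / (1 - g1 ω) := by simp [hcdef, hgA, h]
      rw [hc, abs_div, abs_of_pos (by linarith : (0:ℝ) < 1 - g1 ω)]
      simp only [abs_neg, abs_one]
      exact one_div_le_one_div_of_le hε hpos
    · have hgA : gA ω = g1 ω := by simp [hgAdef, h]
      have hpos : ε ≤ g1 ω := hω.1
      have hc : c ω = 1 / g1 ω := by simp [hcdef, hgA, h]; norm_num
      rw [hc, abs_div, abs_of_pos (by linarith : (0:ℝ) < g1 ω), abs_one]
      exact one_div_le_one_div_of_le hε hpos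
  have hQbb : ∀ ω, |Qb ω| ≤ C1 + C0 := by
    intro ω
    rcases hA01 ω with h | h
    · have : Qb ω = Q0 ω := by simp [hQbdef, h]
      rw [this]; linarith [hC0 ω]
    · have : Qb ω = Q1 ω := by simp [hQbdef, h]
      rw [this]; linarith [hC1 ω]
  have hτb : ∀ ω, |τ ω| ≤ C1 + C0 := by
    intro ω
    have h1 := abs_le.mp (hC1 ω)
    have h0 := abs_le.mp (hC0 ω)
    rw [abs_le]; constructor <;> simp only [hτdef] <;> linarith
  have hτsb : ∀ᵐ ω ∂P, |τs ω| ≤ C1 + C0 := by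
    have hR : ∀ᵐ ω ∂P, |τ ω| ≤ ((⟨C1 + C0, by positivity⟩ : NNReal) : ℝ) :=
      Filter.Eventually.of_forall fun ω => by simpa using hτb ω
    exact ae_bdd_condExp_of_ae_bdd (m := G) (m0 := mΩ) hR
  have hYQbb : ∀ ω, |Y ω - Qb ω| ≤ CY + (C1 + C0) := by
    intro ω
    have h1 := abs_le.mp (hCY ω)
    have h0 := abs_le.mp (hQbb ω)
    rw [abs_le]; constructor <;> linarith
  have hUb : ∀ᵐ ω ∂P, |U ω| ≤ (1 / ε) * (CY + (C1 + C0)) := by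
    filter_upwards [hcb] with ω hc
    have : |U ω| = |c ω| * |Y ω - Qb ω| := by rw [hUdef]; exact abs_mul _ _
    rw [this]
    exact mul_le_mul hc (hYQbb ω) (abs_nonneg _) (by positivity)
  -- integrability
  have intY : Integrable Y P :=
    integrable_of_ae_bound hYm.aestronglyMeasurable CY (Filter.Eventually.of_forall hCY)
  have intQb : Integrable Qb P :=
    integrable_of_ae_bound hQbm.aestronglyMeasurable (C1 + C0)
      (Filter.Eventually.of_forall hQbb)
  have intτ : Integrable τ P :=
    integrable_of_ae_bound hτm.aestronglyMeasurable (C1 + C0)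
      (Filter.Eventually.of_forall hτb)
  -- h3
  have h3 : ∫ ω, τs ω ∂P = ∫ ω, τ ω ∂P := integral_condExp hGm
  -- h2
  have h2 : ∫ ω, τ ω * τs ω ∂P = ∫ ω, τs ω * τs ω ∂P := by
    have intτsτ : Integrable (τs * τ) P := by
      exact intτ.bdd_mul hτsm (by simpa [Real.norm_eq_abs] using hτsb)
    have hpull : P[τs * τ|G] =ᵐ[P] τs * P[τ|G] :=
      condExp_mul_of_stronglyMeasurable_left stronglyMeasurable_condExp intτsτ intτ
    have e1 : ∫ ω, (P[τs * τ|G]) ω ∂P = ∫ ω, (τs * τ) ω ∂P := integral_condExp hGm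
    have e2 : ∫ ω, (P[τs * τ|G]) ω ∂P = ∫ ω, (τs * P[τ|G]) ω ∂P :=
      integral_congr_ae hpull
    calc ∫ ω, τ ω * τs ω ∂P = ∫ ω, (τs * τ) ω ∂P := by
          apply integral_congr_ae; filter_upwards with ω
          simp only [Pi.mul_apply]; ring
      _ = ∫ ω, (τs * P[τ|G]) ω ∂P := e1.symm.trans e2
      _ = ∫ ω, τs ω * τs ω ∂P := by
          apply integral_congr_ae; filter_upwards with ω
          simp only [Pi.mul_apply, ← hτsdef]
  -- h1
  have h1 : ∫ ω, U ω * (τ ω - τs ω) ∂P = 0 := by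
    set f : Ω → ℝ := fun ω => c ω * (τ ω - τs ω) with hfdef
    set g : Ω → ℝ := Y - Qb with hgdef
    have hfSM : StronglyMeasurable[GAW] f := by
      have hc' : StronglyMeasurable[GAW] c :=
        (((measurable_const.mul hAG).sub measurable_const).div
          ((hAG.mul (hg1meas.mono hGWle le_rfl)).add ((measurable_const.sub hAG).mul
            (measurable_const.sub (hg1meas.mono hGWle le_rfl))))).stronglyMeasurable
      have hτ' : StronglyMeasurable[GAW] τ :=
        ((hQ1.mono hGWle le_rfl).sub (hQ0.mono hGWle le_rfl)).stronglyMeasurable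
      have hτs' : StronglyMeasurable[GAW] τs :=
        stronglyMeasurable_condExp.mono (hG.trans hGWle)
      exact hc'.mul (hτ'.sub hτs')
    have hgint : Integrable g P := intY.sub intQb
    have hfg : Integrable (f * g) P := by
      have hfgm : @AEStronglyMeasurable Ω ℝ _ mΩ mΩ (f * g) P := by
        exact (hcm.aestronglyMeasurable.mul (hτm.aestronglyMeasurable.sub hτsm)).mul
          (hYm.sub hQbm).aestronglyMeasurable
      apply integrable_of_ae_bound hfgm
        ((1 / ε) * ((C1 + C0) + (C1 + C0)) * (CY + (C1 + C0)))
      filter_upwards [hcb, hτsb] with ω hc hτs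
      have e : |(f * g) ω| = |c ω| * |τ ω - τs ω| * |Y ω - Qb ω| := by
        simp only [Pi.mul_apply, hfdef, hgdef, Pi.sub_apply, abs_mul]
      rw [e]
      have hd : |τ ω - τs ω| ≤ (C1 + C0) + (C1 + C0) := by
        have ha := abs_le.mp (hτb ω)
        have hb := abs_le.mp hτs
        rw [abs_le]; constructor <;> linarith
      have h1e : (0:ℝ) ≤ 1 / ε := by positivity
      apply mul_le_mul _ (hYQbb ω) (abs_nonneg _) (by positivity)
      exact mul_le_mul hc hd (abs_nonneg _) h1e
    have hpull : P[f * g|GAW] =ᵐ[P] f * P[g|GAW] :=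
      condExp_mul_of_stronglyMeasurable_left hfSM hfg hgint
    have hQbSM : StronglyMeasurable[GAW] Qb :=
      ((hAG.mul (hQ1.mono hGWle le_rfl)).add ((measurable_const.sub hAG).mul
        (hQ0.mono hGWle le_rfl))).stronglyMeasurable
    have hce : P[Qb|GAW] = Qb := condExp_of_stronglyMeasurable hGAW hQbSM intQb
    have hg0 : P[g|GAW] =ᵐ[P] (0 : Ω → ℝ) := by
      have hsub : P[g|GAW] =ᵐ[P] P[Y|GAW] - P[Qb|GAW] := by
        rw [hgdef]; exact condExp_sub intY intQb GAW
      filter_upwards [hsub, hQ] with ω hs hq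
      rw [hs, Pi.sub_apply, hq, hce, Pi.zero_apply, sub_self]
    have hzero : f * P[g|GAW] =ᵐ[P] (0 : Ω → ℝ) := by
      filter_upwards [hg0] with ω hω
      simp [Pi.mul_apply, hω]
    have e1 : ∫ ω, (f * g) ω ∂P = ∫ ω, (P[f * g|GAW]) ω ∂P :=
      (integral_condExp hGAW).symm
    have e2 : ∫ ω, (P[f * g|GAW]) ω ∂P = ∫ ω, (0 : Ω → ℝ) ω ∂P :=
      integral_congr_ae (hpull.trans hzero)
    have e0 : ∫ ω, U ω * (τ ω - τs ω) ∂P = ∫ ω, (f * g) ω ∂P := by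
      apply integral_congr_ae; filter_upwards with ω
      simp only [Pi.mul_apply, hUdef, hfdef, hgdef, Pi.sub_apply]; ring
    rw [e0, e1, e2]
    simp
  -- finish
  have hfin := ee_abstract P U τ τs ((1 / ε) * (CY + (C1 + C0))) (C1 + C0) (C1 + C0)
    hUm.aestronglyMeasurable hτm.aestronglyMeasurable hτsm
    hUb (Filter.Eventually.of_forall hτb) hτsb h1 h2 h3
  rw [← hfin]
  apply integral_congr_ae; filter_upwards with ω
  simp only [hUdef, hτdef]; ring
end

section
/- Let h be a bounded 𝒢_W-measurable real-valued function. Then E[ h·((2A−1)/g_n(A))·(Y − Q̄_n(A)) ] = E[ h·( (g₁/g_{n,1})·(Q̄₁ − Q̄_{n,1}) − ((1−g₁)/(1−g_{n,1}))·(Q̄₀ − Q̄_{n,0}) ) ]. (This computes the expectation of the weighted residual term of the efficient influence curve at estimated nuisance functions, the key step in the doubly robust remainder expansion.) -/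
open MeasureTheory ProbabilityTheory

/-- Integrability from an a.e. bound on a finite measure space. -/
lemma integrable_of_ae_bdd {Ω : Type*} {mΩ : MeasurableSpace Ω} {P : Measure Ω}
    [IsFiniteMeasure P] {f : Ω → ℝ} (hf : Measurable f) {C : ℝ}
    (hC : ∀ᵐ ω ∂P, |f ω| ≤ C) : Integrable f P :=
  ⟨hf.aestronglyMeasurable, HasFiniteIntegral.of_bounded (C := C)
    (hC.mono fun ω hω => by simpa [Real.norm_eq_abs] using hω)⟩

/-- Pull-out + tower: `∫ f·Z = ∫ f·E[Z|m]` for `m`-measurable `f`. -/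
lemma integral_mul_eq_integral_mul_condexp {Ω : Type*} {mΩ : MeasurableSpace Ω}
    (P : Measure Ω) [IsProbabilityMeasure P] (m : MeasurableSpace Ω) (hm : m ≤ mΩ)
    (f Z : Ω → ℝ) (hf : StronglyMeasurable[m] f)
    (hfZ : Integrable (f * Z) P) (hZ : Integrable Z P) :
    ∫ ω, f ω * Z ω ∂P = ∫ ω, f ω * (P[Z|m]) ω ∂P := by
  have h1 : P[f * Z|m] =ᵐ[P] f * P[Z|m] :=
    condExp_mul_of_stronglyMeasurable_left hf hfZ hZ
  calc ∫ ω, f ω * Z ω ∂P = ∫ ω, (f * Z) ω ∂P := rfl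
    _ = ∫ ω, (P[f * Z|m]) ω ∂P := (integral_condExp hm).symm
    _ = ∫ ω, (f * P[Z|m]) ω ∂P := integral_congr_ae h1
    _ = ∫ ω, f ω * (P[Z|m]) ω ∂P := rfl

/-- For bounded `𝒢_W`-measurable `h`,
`E[h·((2A−1)/gₙ(A))·(Y − Q̄ₙ(A))]
  = E[h·((g₁/g_{n,1})·(Q̄₁ − Q̄_{n,1}) − ((1−g₁)/(1−g_{n,1}))·(Q̄₀ − Q̄_{n,0}))]`. -/
theorem weighted_residual_expectation
    {Ω : Type*} (GW : MeasurableSpace Ω) (GAW : MeasurableSpace Ω) {mΩ : MeasurableSpace Ω} (P : Measure Ω) [IsProbabilityMeasure P]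
    (hGW : GW ≤ mΩ)
    (A : Ω → ℝ) (hA : Measurable A) (hA01 : ∀ ω, A ω = 0 ∨ A ω = 1)
    (hGAW_def : GAW = GW ⊔ MeasurableSpace.comap A inferInstance) (hGAW : GAW ≤ mΩ)
    (Y : Ω → ℝ) (hY : Measurable Y) (hYbdd : ∃ C, ∀ ω, |Y ω| ≤ C)
    (Q1 Q0 : Ω → ℝ) (hQ1 : Measurable[GW] Q1) (hQ0 : Measurable[GW] Q0)
    (hQ1bdd : ∃ C, ∀ ω, |Q1 ω| ≤ C) (hQ0bdd : ∃ C, ∀ ω, |Q0 ω| ≤ C)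
    (hQ : P[Y | GAW] =ᵐ[P] fun ω => A ω * Q1 ω + (1 - A ω) * Q0 ω)
    (g1 : Ω → ℝ) (hg1 : g1 =ᵐ[P] P[A | GW]) (hg1meas : Measurable[GW] g1)
    (ε : ℝ) (hε : 0 < ε) (hε' : ε < 1 / 2)
    (hg1bdd : ∀ᵐ ω ∂P, ε ≤ g1 ω ∧ g1 ω ≤ 1 - ε)
    -- estimated nuisance functions
    (gn1 : Ω → ℝ) (hgn1meas : Measurable[GW] gn1)
    (hgn1bdd : ∀ᵐ ω ∂P, ε ≤ gn1 ω ∧ gn1 ω ≤ 1 - ε)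
    (Qn1 Qn0 : Ω → ℝ) (hQn1 : Measurable[GW] Qn1) (hQn0 : Measurable[GW] Qn0)
    (hQn1bdd : ∃ C, ∀ ω, |Qn1 ω| ≤ C) (hQn0bdd : ∃ C, ∀ ω, |Qn0 ω| ≤ C)
    -- bounded 𝒢_W-measurable weight
    (h : Ω → ℝ) (hh : Measurable[GW] h) (hhbdd : ∃ C, ∀ ω, |h ω| ≤ C) :
    ∫ ω,
        h ω * ((2 * A ω - 1) / (A ω * gn1 ω + (1 - A ω) * (1 - gn1 ω)))
          * (Y ω - (A ω * Qn1 ω + (1 - A ω) * Qn0 ω)) ∂P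
      = ∫ ω,
          h ω * ((g1 ω / gn1 ω) * (Q1 ω - Qn1 ω)
            - ((1 - g1 ω) / (1 - gn1 ω)) * (Q0 ω - Qn0 ω)) ∂P := by
  -- bounds
  obtain ⟨Ch, hCh⟩ := hhbdd
  obtain ⟨CY, hCY⟩ := hYbdd
  obtain ⟨C1, hC1⟩ := hQ1bdd
  obtain ⟨C0, hC0⟩ := hQ0bdd
  obtain ⟨Cn1, hCn1⟩ := hQn1bdd
  obtain ⟨Cn0, hCn0⟩ := hQn0bdd
  set Ch' := max Ch 0 with hCh'def
  have hCh' : ∀ ω, |h ω| ≤ Ch' := fun ω => (hCh ω).trans (le_max_left _ _)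
  have hCh'0 : 0 ≤ Ch' := le_max_right _ _
  have hGWle : GW ≤ GAW := hGAW_def ▸ le_sup_left
  have hA_GAW : Measurable[GAW] A := by
    rw [hGAW_def]; exact Measurable.of_comap_le le_sup_right
  have hA' : Measurable[mΩ] A := hA
  have hY' : Measurable[mΩ] Y := hY
  -- key functions
  set ψ1 : Ω → ℝ := fun ω => h ω / gn1 ω * (Q1 ω - Qn1 ω) with hψ1def
  set ψ0 : Ω → ℝ := fun ω => h ω / (1 - gn1 ω) * (Q0 ω - Qn0 ω) with hψ0def
  set ψ : Ω → ℝ := fun ω => ψ1 ω + ψ0 ω with hψdef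
  set F : Ω → ℝ := fun ω => A ω * (h ω / gn1 ω) - (1 - A ω) * (h ω / (1 - gn1 ω))
    with hFdef
  -- measurability
  have hhdgn : Measurable[GW] fun ω => h ω / gn1 ω := hh.div hgn1meas
  have hhdgn' : Measurable[GW] fun ω => h ω / (1 - gn1 ω) :=
    hh.div (measurable_const.sub hgn1meas)
  have hψ1m : Measurable[GW] ψ1 := hhdgn.mul (hQ1.sub hQn1)
  have hψ0m : Measurable[GW] ψ0 := hhdgn'.mul (hQ0.sub hQn0)
  have hψm : Measurable[GW] ψ := hψ1m.add hψ0m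
  have hFm : Measurable[GAW] F :=
    ((hA_GAW.mul (hhdgn.mono hGWle le_rfl)).sub
      ((measurable_const.sub hA_GAW).mul (hhdgn'.mono hGWle le_rfl)))
  have hFm' : Measurable[mΩ] F := hFm.mono hGAW le_rfl
  have hψm' : Measurable[mΩ] ψ := hψm.mono hGW le_rfl
  have hψ0m' : Measurable[mΩ] ψ0 := hψ0m.mono hGW le_rfl
  have hψ1m' : Measurable[mΩ] ψ1 := hψ1m.mono hGW le_rfl
  -- a.e. bounds for division terms
  have hdiv1 : ∀ᵐ ω ∂P, |h ω / gn1 ω| ≤ Ch' / ε := by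
    filter_upwards [hgn1bdd] with ω ⟨h1, h2⟩
    rw [abs_div, abs_of_pos (lt_of_lt_of_le hε h1)]
    exact div_le_div₀ hCh'0 (hCh' ω) hε h1
  have hdiv0 : ∀ᵐ ω ∂P, |h ω / (1 - gn1 ω)| ≤ Ch' / ε := by
    filter_upwards [hgn1bdd] with ω ⟨h1, h2⟩
    have h3 : ε ≤ 1 - gn1 ω := by linarith
    rw [abs_div, abs_of_pos (lt_of_lt_of_le hε h3)]
    exact div_le_div₀ hCh'0 (hCh' ω) hε h3
  have hFbdd : ∀ᵐ ω ∂P, |F ω| ≤ Ch' / ε := by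
    filter_upwards [hdiv1, hdiv0] with ω h1 h0
    rcases hA01 ω with hA0 | hA1
    · simpa [hFdef, hA0] using h0
    · simpa [hFdef, hA1] using h1
  have hψ1bdd : ∀ᵐ ω ∂P, |ψ1 ω| ≤ Ch' / ε * (C1 + Cn1) := by
    filter_upwards [hdiv1] with ω h1
    calc |ψ1 ω| = |h ω / gn1 ω| * |Q1 ω - Qn1 ω| := abs_mul _ _
      _ ≤ (Ch' / ε) * (C1 + Cn1) := by
          apply mul_le_mul h1 ((abs_sub _ _).trans (add_le_add (hC1 ω) (hCn1 ω)))
            (abs_nonneg _) (div_nonneg hCh'0 hε.le)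
  have hψ0bdd : ∀ᵐ ω ∂P, |ψ0 ω| ≤ Ch' / ε * (C0 + Cn0) := by
    filter_upwards [hdiv0] with ω h0
    calc |ψ0 ω| = |h ω / (1 - gn1 ω)| * |Q0 ω - Qn0 ω| := abs_mul _ _
      _ ≤ (Ch' / ε) * (C0 + Cn0) := by
          apply mul_le_mul h0 ((abs_sub _ _).trans (add_le_add (hC0 ω) (hCn0 ω)))
            (abs_nonneg _) (div_nonneg hCh'0 hε.le)
  have hψbdd : ∀ᵐ ω ∂P, |ψ ω| ≤ Ch' / ε * (C1 + Cn1) + Ch' / ε * (C0 + Cn0) := by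
    filter_upwards [hψ1bdd, hψ0bdd] with ω h1 h0
    exact (abs_add_le _ _).trans (add_le_add h1 h0)
  have hAbd : ∀ ω, |A ω| ≤ 1 := by
    intro ω; rcases hA01 ω with h' | h' <;> simp [h']
  -- integrabilities
  have hY_int : Integrable Y P :=
    integrable_of_ae_bdd hY' (Filter.Eventually.of_forall hCY)
  have hFY_int : Integrable (fun ω => F ω * Y ω) P := by
    apply integrable_of_ae_bdd (hFm'.mul hY') (C := Ch' / ε * CY)
    filter_upwards [hFbdd] with ω hF'
    calc |F ω * Y ω| = |F ω| * |Y ω| := abs_mul _ _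
      _ ≤ Ch' / ε * CY := mul_le_mul hF' (hCY ω) (abs_nonneg _) (div_nonneg hCh'0 hε.le)
  have hQbar_meas : Measurable[mΩ] fun ω => A ω * Q1 ω + (1 - A ω) * Q0 ω :=
    (hA'.mul (hQ1.mono hGW le_rfl)).add
      ((measurable_const.sub hA').mul (hQ0.mono hGW le_rfl))
  have hQbar_bdd : ∀ ω, |A ω * Q1 ω + (1 - A ω) * Q0 ω| ≤ C1 + C0 := by
    intro ω
    rcases hA01 ω with h' | h' <;> simp [h']
    · calc |Q0 ω| ≤ C0 := hC0 ω
        _ ≤ C1 + C0 := by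
            have := (abs_nonneg (Q1 ω)).trans (hC1 ω); linarith
    · calc |Q1 ω| ≤ C1 := hC1 ω
        _ ≤ C1 + C0 := by
            have := (abs_nonneg (Q0 ω)).trans (hC0 ω); linarith
  have hQnbar_meas : Measurable[mΩ] fun ω => A ω * Qn1 ω + (1 - A ω) * Qn0 ω :=
    (hA'.mul (hQn1.mono hGW le_rfl)).add
      ((measurable_const.sub hA').mul (hQn0.mono hGW le_rfl))
  have hQnbar_bdd : ∀ ω, |A ω * Qn1 ω + (1 - A ω) * Qn0 ω| ≤ Cn1 + Cn0 := by
    intro ω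
    rcases hA01 ω with h' | h' <;> simp [h']
    · calc |Qn0 ω| ≤ Cn0 := hCn0 ω
        _ ≤ Cn1 + Cn0 := by
            have := (abs_nonneg (Qn1 ω)).trans (hCn1 ω); linarith
    · calc |Qn1 ω| ≤ Cn1 := hCn1 ω
        _ ≤ Cn1 + Cn0 := by
            have := (abs_nonneg (Qn0 ω)).trans (hCn0 ω); linarith
  have hFQn_int : Integrable (fun ω => F ω * (A ω * Qn1 ω + (1 - A ω) * Qn0 ω)) P := by
    apply integrable_of_ae_bdd (hFm'.mul hQnbar_meas)
      (C := Ch' / ε * (Cn1 + Cn0))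
    filter_upwards [hFbdd] with ω hF'
    calc |F ω * (A ω * Qn1 ω + (1 - A ω) * Qn0 ω)| = |F ω| * _ := abs_mul _ _
      _ ≤ Ch' / ε * (Cn1 + Cn0) :=
          mul_le_mul hF' (hQnbar_bdd ω) (abs_nonneg _) (div_nonneg hCh'0 hε.le)
  have hFQbar_int : Integrable (fun ω => F ω * (A ω * Q1 ω + (1 - A ω) * Q0 ω)) P := by
    apply integrable_of_ae_bdd (hFm'.mul hQbar_meas)
      (C := Ch' / ε * (C1 + C0))
    filter_upwards [hFbdd] with ω hF'
    calc |F ω * (A ω * Q1 ω + (1 - A ω) * Q0 ω)| = |F ω| * _ := abs_mul _ _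
      _ ≤ Ch' / ε * (C1 + C0) :=
          mul_le_mul hF' (hQbar_bdd ω) (abs_nonneg _) (div_nonneg hCh'0 hε.le)
  have hA_int : Integrable A P :=
    integrable_of_ae_bdd hA' (Filter.Eventually.of_forall hAbd)
  have hψA_int : Integrable (fun ω => ψ ω * A ω) P := by
    apply integrable_of_ae_bdd (hψm'.mul hA')
      (C := Ch' / ε * (C1 + Cn1) + Ch' / ε * (C0 + Cn0))
    filter_upwards [hψbdd] with ω hψ'
    calc |ψ ω * A ω| = |ψ ω| * |A ω| := abs_mul _ _
      _ ≤ (Ch' / ε * (C1 + Cn1) + Ch' / ε * (C0 + Cn0)) * 1 :=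
          mul_le_mul hψ' (hAbd ω) (abs_nonneg _)
            (le_trans (abs_nonneg _) hψ')
      _ = _ := mul_one _
  have hψ0_int : Integrable ψ0 P :=
    integrable_of_ae_bdd hψ0m' hψ0bdd
  have hψg1_int : Integrable (fun ω => ψ ω * g1 ω) P := by
    apply integrable_of_ae_bdd (hψm'.mul (hg1meas.mono hGW le_rfl))
      (C := Ch' / ε * (C1 + Cn1) + Ch' / ε * (C0 + Cn0))
    filter_upwards [hψbdd, hg1bdd] with ω hψ' ⟨hg1a, hg1b⟩
    have hg1abs : |g1 ω| ≤ 1 := by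
      rw [abs_le]; constructor <;> linarith
    calc |ψ ω * g1 ω| = |ψ ω| * |g1 ω| := abs_mul _ _
      _ ≤ (Ch' / ε * (C1 + Cn1) + Ch' / ε * (C0 + Cn0)) * 1 :=
          mul_le_mul hψ' hg1abs (abs_nonneg _) (le_trans (abs_nonneg _) hψ')
      _ = _ := mul_one _
  -- STEP 1: rewrite integrand as F * (Y - Q̄ₙ(A)) and split
  have step1 :
      ∫ ω, h ω * ((2 * A ω - 1) / (A ω * gn1 ω + (1 - A ω) * (1 - gn1 ω)))
          * (Y ω - (A ω * Qn1 ω + (1 - A ω) * Qn0 ω)) ∂P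
        = ∫ ω, F ω * Y ω ∂P
          - ∫ ω, F ω * (A ω * Qn1 ω + (1 - A ω) * Qn0 ω) ∂P := by
    rw [← integral_sub hFY_int hFQn_int]
    apply integral_congr_ae
    apply Filter.Eventually.of_forall
    intro ω
    rcases hA01 ω with h' | h' <;> simp [hFdef, h'] <;> ring
  -- STEP 2: ∫ F·Y = ∫ F·Q̄(A)
  have step2 : ∫ ω, F ω * Y ω ∂P
      = ∫ ω, F ω * (A ω * Q1 ω + (1 - A ω) * Q0 ω) ∂P := by
    rw [integral_mul_eq_integral_mul_condexp P GAW hGAW F Y hFm.stronglyMeasurable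
      hFY_int hY_int]
    apply integral_congr_ae
    filter_upwards [hQ] with ω hω
    rw [hω]
  -- STEP 3: combine and rewrite pointwise as ψ·A - ψ0
  have step3 :
      ∫ ω, F ω * (A ω * Q1 ω + (1 - A ω) * Q0 ω) ∂P
        - ∫ ω, F ω * (A ω * Qn1 ω + (1 - A ω) * Qn0 ω) ∂P
      = ∫ ω, ψ ω * A ω ∂P - ∫ ω, ψ0 ω ∂P := by
    rw [← integral_sub hFQbar_int hFQn_int, ← integral_sub hψA_int hψ0_int]
    apply integral_congr_ae
    apply Filter.Eventually.of_forall
    intro ω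
    rcases hA01 ω with h' | h' <;>
      simp [hFdef, hψdef, hψ1def, hψ0def, h'] <;> ring
  -- STEP 4: ∫ ψ·A = ∫ ψ·g1
  have step4 : ∫ ω, ψ ω * A ω ∂P = ∫ ω, ψ ω * g1 ω ∂P := by
    rw [integral_mul_eq_integral_mul_condexp P GW hGW ψ A hψm.stronglyMeasurable
      hψA_int hA_int]
    apply integral_congr_ae
    filter_upwards [hg1] with ω hω
    rw [← hω]
  -- STEP 5: conclude
  rw [step1, step2, step3, step4, ← integral_sub hψg1_int hψ0_int]
  apply integral_congr_ae
  apply Filter.Eventually.of_forall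
  intro ω
  simp only [hψdef, hψ1def, hψ0def]
  ring
end

section
/- (Remainder identity for the treatment-effect variable importance measure, equation (9).) With ψ₂ := E[(τ − τ_s)²] = Var(τ) − Var(τ_s), the following exact identity holds: E[ 2(τ_n − τ_{s,n})·((2A−1)/g_n(A))·(Y − Q̄_n(A)) + (τ_n − τ_{s,n})² ] − E[(τ − τ_s)²] = E[(τ_s − τ_{s,n})²] − E[(τ − τ_n)²] + E[ 2(τ_n − τ_{s,n})·( ((g₁ − g_{n,1})/g_{n,1})·(Q̄₁ − Q̄_{n,1}) − ((g_{n,1} − g₁)/(1−g_{n,1}))·(Q̄₀ − Q̄_{n,0}) ) ]. In other words, the second-order remainder R(Pₙ, P₀) of the plug-in estimator decomposes into a CATE-estimation-error term E[(τ_s − τ_{s,n})² − (τ − τ_n)²] plus a doubly robust cross-product term. -/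
open MeasureTheory ProbabilityTheory

namespace VimAux

variable {Ω : Type*} {mΩ : MeasurableSpace Ω} {P : Measure Ω}

/-- a.e. boundedness -/
def Bdd (P : Measure Ω) (f : Ω → ℝ) : Prop := ∃ C, ∀ᵐ ω ∂P, |f ω| ≤ C

lemma Bdd.of_forall {f : Ω → ℝ} {C : ℝ} (h : ∀ ω, |f ω| ≤ C) : Bdd P f := ⟨C, ae_of_all _ h⟩

lemma Bdd.add {f g : Ω → ℝ} (hf : Bdd P f) (hg : Bdd P g) :
    Bdd P (fun ω => f ω + g ω) := by
  obtain ⟨Cf, hf⟩ := hf; obtain ⟨Cg, hg⟩ := hg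
  exact ⟨Cf + Cg, by
    filter_upwards [hf, hg] with ω h1 h2
    exact (abs_add_le _ _).trans (add_le_add h1 h2)⟩

lemma Bdd.neg {f : Ω → ℝ} (hf : Bdd P f) : Bdd P (fun ω => -f ω) := by
  obtain ⟨Cf, hf⟩ := hf
  exact ⟨Cf, by filter_upwards [hf] with ω h1; simpa using h1⟩

lemma Bdd.sub {f g : Ω → ℝ} (hf : Bdd P f) (hg : Bdd P g) :
    Bdd P (fun ω => f ω - g ω) := by
  simpa [sub_eq_add_neg] using hf.add hg.neg

lemma Bdd.mul {f g : Ω → ℝ} (hf : Bdd P f) (hg : Bdd P g) :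
    Bdd P (fun ω => f ω * g ω) := by
  obtain ⟨Cf, hf⟩ := hf; obtain ⟨Cg, hg⟩ := hg
  refine ⟨max Cf 0 * max Cg 0, ?_⟩
  filter_upwards [hf, hg] with ω h1 h2
  rw [abs_mul]
  exact mul_le_mul (h1.trans (le_max_left _ _)) (h2.trans (le_max_left _ _))
    (abs_nonneg _) (le_max_right _ _)

lemma Bdd.const_mul {f : Ω → ℝ} (c : ℝ) (hf : Bdd P f) :
    Bdd P (fun ω => c * f ω) :=
  (Bdd.of_forall (f := fun _ => c) (C := |c|) fun _ => le_rfl).mul hf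

lemma Bdd.sq {f : Ω → ℝ} (hf : Bdd P f) : Bdd P (fun ω => f ω ^ 2) := by
  obtain ⟨C, hC⟩ := hf.mul hf
  exact ⟨C, by filter_upwards [hC] with ω hω; rwa [pow_two]⟩

lemma abs_div_le' {x y c ε : ℝ} (hε : 0 < ε) (hx : |x| ≤ c) (hy : ε ≤ y) :
    |x / y| ≤ c / ε := by
  rw [abs_div]
  exact div_le_div₀ ((abs_nonneg x).trans hx) hx hε (hy.trans (le_abs_self y))

lemma Bdd.div_den {f d : Ω → ℝ} {ε : ℝ} (hε : 0 < ε) (hf : Bdd P f)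
    (hd : ∀ᵐ ω ∂P, ε ≤ d ω) : Bdd P (fun ω => f ω / d ω) := by
  obtain ⟨C, hC⟩ := hf
  refine ⟨max C 0 / ε, ?_⟩
  filter_upwards [hC, hd] with ω h1 h2
  exact abs_div_le' hε (h1.trans (le_max_left _ _)) h2

lemma Bdd.integrable [IsFiniteMeasure P] {f : Ω → ℝ}
    (hf : AEStronglyMeasurable f P) (h : Bdd P f) : Integrable f P := by
  obtain ⟨C, hC⟩ := h
  exact (integrable_const C).mono' hf (by simpa [Real.norm_eq_abs] using hC)

/-- pull-out property in integral form -/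
lemma integral_mul_condexp {m : MeasurableSpace Ω} (hm : m ≤ mΩ)
    [IsFiniteMeasure P] {f g : Ω → ℝ} (hf : StronglyMeasurable[m] f)
    (hfg : Integrable (fun ω => f ω * g ω) P) (hg : Integrable g P) :
    ∫ ω, f ω * g ω ∂P = ∫ ω, f ω * (P[g|m]) ω ∂P := by
  have h1 : P[f * g|m] =ᵐ[P] f * P[g|m] := condExp_mul_of_stronglyMeasurable_left hf hfg hg
  calc ∫ ω, f ω * g ω ∂P = ∫ ω, (P[f * g|m]) ω ∂P := (integral_condExp hm).symm
    _ = ∫ ω, f ω * (P[g|m]) ω ∂P := integral_congr_ae h1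

end VimAux


/-- remainder identity for the VIM, equation (9): the second-order remainder
of the plug-in estimator decomposes into a CATE-estimation-error term plus a doubly robust
cross-product term. -/
theorem vim_remainder_identity
    {Ω : Type*} (GW : MeasurableSpace Ω) (GAW : MeasurableSpace Ω) (G : MeasurableSpace Ω) {mΩ : MeasurableSpace Ω} (P : Measure Ω) [IsProbabilityMeasure P]
    (hGW : GW ≤ mΩ)
    (A : Ω → ℝ) (hA : Measurable A) (hA01 : ∀ ω, A ω = 0 ∨ A ω = 1)
    (hGAW_def : GAW = GW ⊔ MeasurableSpace.comap A inferInstance) (hGAW : GAW ≤ mΩ)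
    (Y : Ω → ℝ) (hY : Measurable Y) (hYbdd : ∃ C, ∀ ω, |Y ω| ≤ C)
    (Q1 Q0 : Ω → ℝ) (hQ1 : Measurable[GW] Q1) (hQ0 : Measurable[GW] Q0)
    (hQ1bdd : ∃ C, ∀ ω, |Q1 ω| ≤ C) (hQ0bdd : ∃ C, ∀ ω, |Q0 ω| ≤ C)
    (hQ : P[Y | GAW] =ᵐ[P] fun ω => A ω * Q1 ω + (1 - A ω) * Q0 ω)
    (g1 : Ω → ℝ) (hg1 : g1 =ᵐ[P] P[A | GW]) (hg1meas : Measurable[GW] g1)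
    (ε : ℝ) (hε : 0 < ε) (hε' : ε < 1 / 2)
    (hg1bdd : ∀ᵐ ω ∂P, ε ≤ g1 ω ∧ g1 ω ≤ 1 - ε)
    (hG : G ≤ GW)
    -- estimated nuisance functions
    (gn1 : Ω → ℝ) (hgn1meas : Measurable[GW] gn1)
    (hgn1bdd : ∀ᵐ ω ∂P, ε ≤ gn1 ω ∧ gn1 ω ≤ 1 - ε)
    (Qn1 Qn0 : Ω → ℝ) (hQn1 : Measurable[GW] Qn1) (hQn0 : Measurable[GW] Qn0)
    (hQn1bdd : ∃ C, ∀ ω, |Qn1 ω| ≤ C) (hQn0bdd : ∃ C, ∀ ω, |Qn0 ω| ≤ C)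
    -- estimated reduced CATE : bounded G-measurable
    (τsn : Ω → ℝ) (hτsn : Measurable[G] τsn) (hτsnbdd : ∃ C, ∀ ω, |τsn ω| ≤ C) :
    (∫ ω,
        (2 * ((Qn1 ω - Qn0 ω) - τsn ω)
          * ((2 * A ω - 1) / (A ω * gn1 ω + (1 - A ω) * (1 - gn1 ω)))
          * (Y ω - (A ω * Qn1 ω + (1 - A ω) * Qn0 ω))
        + ((Qn1 ω - Qn0 ω) - τsn ω) ^ 2) ∂P)
      - ∫ ω, ((Q1 ω - Q0 ω) - (P[fun ω' => Q1 ω' - Q0 ω' | G]) ω) ^ 2 ∂P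
    =
    (∫ ω, ((P[fun ω' => Q1 ω' - Q0 ω' | G]) ω - τsn ω) ^ 2 ∂P)
      - (∫ ω, ((Q1 ω - Q0 ω) - (Qn1 ω - Qn0 ω)) ^ 2 ∂P)
      + ∫ ω,
          2 * ((Qn1 ω - Qn0 ω) - τsn ω)
            * (((g1 ω - gn1 ω) / gn1 ω) * (Q1 ω - Qn1 ω)
              - ((gn1 ω - g1 ω) / (1 - gn1 ω)) * (Q0 ω - Qn0 ω)) ∂P := by

  classical
  obtain ⟨C1, hC1⟩ := hQ1bdd
  obtain ⟨C0, hC0⟩ := hQ0bdd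
  obtain ⟨Cn1, hCn1⟩ := hQn1bdd
  obtain ⟨Cn0, hCn0⟩ := hQn0bdd
  obtain ⟨Cs, hCs⟩ := hτsnbdd
  obtain ⟨CY, hCY⟩ := hYbdd
  have hGle : G ≤ mΩ := hG.trans hGW
  have hGWle : GW ≤ GAW := by rw [hGAW_def]; exact le_sup_left
  have hAGAW : Measurable[GAW] A := by
    rw [hGAW_def]; exact measurable_iff_comap_le.mpr le_sup_right
  -- ambient measurability of atoms
  have mQ1 : Measurable[mΩ] Q1 := hQ1.mono hGW le_rfl
  have mQ0 : Measurable[mΩ] Q0 := hQ0.mono hGW le_rfl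
  have mQn1 : Measurable[mΩ] Qn1 := hQn1.mono hGW le_rfl
  have mQn0 : Measurable[mΩ] Qn0 := hQn0.mono hGW le_rfl
  have mg1 : Measurable[mΩ] g1 := hg1meas.mono hGW le_rfl
  have mgn1 : Measurable[mΩ] gn1 := hgn1meas.mono hGW le_rfl
  have mτsn : Measurable[mΩ] τsn := hτsn.mono hGle le_rfl
  have mτs : Measurable[mΩ] (P[fun ω' => Q1 ω' - Q0 ω' | G]) := stronglyMeasurable_condExp.measurable.mono hGle le_rfl
  have mA : Measurable[mΩ] A := hA
  have mY : Measurable[mΩ] Y := hY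
  have mE : Measurable[mΩ] (fun ω => ((Qn1 ω - Qn0 ω) - τsn ω)) := (mQn1.sub mQn0).sub mτsn
  have mD : Measurable[mΩ] (fun ω => ((2 * A ω - 1) / (A ω * gn1 ω + (1 - A ω) * (1 - gn1 ω)))) :=
    ((mA.const_mul 2).sub measurable_const).div
      ((mA.mul mgn1).add ((measurable_const.sub mA).mul (measurable_const.sub mgn1)))
  have m2ED : Measurable[mΩ] (fun ω => 2 * ((Qn1 ω - Qn0 ω) - τsn ω) * ((2 * A ω - 1) / (A ω * gn1 ω + (1 - A ω) * (1 - gn1 ω)))) := (measurable_const.mul mE).mul mD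
  have mQN : Measurable[mΩ] (fun ω => (A ω * Qn1 ω + (1 - A ω) * Qn0 ω)) :=
    (mA.mul mQn1).add ((measurable_const.sub mA).mul mQn0)
  have mQB : Measurable[mΩ] (fun ω => (A ω * Q1 ω + (1 - A ω) * Q0 ω)) :=
    (mA.mul mQ1).add ((measurable_const.sub mA).mul mQ0)
  have mV : Measurable[mΩ] (fun ω => (2 * ((Qn1 ω - Qn0 ω) - τsn ω) * (Q1 ω - Qn1 ω) / gn1 ω)) :=
    ((measurable_const.mul mE).mul (mQ1.sub mQn1)).div mgn1
  have mW : Measurable[mΩ] (fun ω => (-(2 * ((Qn1 ω - Qn0 ω) - τsn ω) * (Q0 ω - Qn0 ω) / (1 - gn1 ω)))) :=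
    (((measurable_const.mul mE).mul (mQ0.sub mQn0)).div (measurable_const.sub mgn1)).neg
  have mVW : Measurable[mΩ] (fun ω => (2 * ((Qn1 ω - Qn0 ω) - τsn ω) * (Q1 ω - Qn1 ω) / gn1 ω) - (-(2 * ((Qn1 ω - Qn0 ω) - τsn ω) * (Q0 ω - Qn0 ω) / (1 - gn1 ω)))) := mV.sub mW
  have mCC : Measurable[mΩ] (fun ω => (((g1 ω - gn1 ω) / gn1 ω) * (Q1 ω - Qn1 ω) - ((gn1 ω - g1 ω) / (1 - gn1 ω)) * (Q0 ω - Qn0 ω))) :=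
    (((mg1.sub mgn1).div mgn1).mul (mQ1.sub mQn1)).sub
      (((mgn1.sub mg1).div (measurable_const.sub mgn1)).mul (mQ0.sub mQn0))
  have mS8 : Measurable[mΩ] (fun ω => 2 * ((Qn1 ω - Qn0 ω) - τsn ω) * ((Q1 ω - Q0 ω) - (Qn1 ω - Qn0 ω))) :=
    (measurable_const.mul mE).mul ((mQ1.sub mQ0).sub (mQn1.sub mQn0))
  have mS2 : Measurable[mΩ] (fun ω => ((Qn1 ω - Qn0 ω) - τsn ω) ^ 2) := mE.pow_const 2
  have mS12 : Measurable[mΩ] (fun ω => ((Q1 ω - Q0 ω) - (Qn1 ω - Qn0 ω)) ^ 2) :=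
    ((mQ1.sub mQ0).sub (mQn1.sub mQn0)).pow_const 2
  have mS11 : Measurable[mΩ] (fun ω => ((P[fun ω' => Q1 ω' - Q0 ω' | G]) ω - τsn ω) ^ 2) := (mτs.sub mτsn).pow_const 2
  have mS10 : Measurable[mΩ] (fun ω => ((Q1 ω - Q0 ω) - (P[fun ω' => Q1 ω' - Q0 ω' | G]) ω) ^ 2) :=
    ((mQ1.sub mQ0).sub mτs).pow_const 2
  -- a.e. lower bounds on denominators
  have hd1 : ∀ᵐ ω ∂P, ε ≤ gn1 ω := by filter_upwards [hgn1bdd] with ω h; exact h.1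
  have hd2 : ∀ᵐ ω ∂P, ε ≤ 1 - gn1 ω := by
    filter_upwards [hgn1bdd] with ω h; linarith [h.2]
  have hden : ∀ᵐ ω ∂P, ε ≤ A ω * gn1 ω + (1 - A ω) * (1 - gn1 ω) := by
    filter_upwards [hgn1bdd] with ω h
    rcases hA01 ω with h' | h' <;> rw [h'] <;> nlinarith [h.1, h.2]
  -- Bdd atoms
  have bc : ∀ c : ℝ, VimAux.Bdd P (fun _ => c) := fun c => ⟨|c|, ae_of_all _ fun _ => le_rfl⟩
  have bQ1 : VimAux.Bdd P Q1 := ⟨C1, ae_of_all _ hC1⟩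
  have bQ0 : VimAux.Bdd P Q0 := ⟨C0, ae_of_all _ hC0⟩
  have bQn1 : VimAux.Bdd P Qn1 := ⟨Cn1, ae_of_all _ hCn1⟩
  have bQn0 : VimAux.Bdd P Qn0 := ⟨Cn0, ae_of_all _ hCn0⟩
  have bτsn : VimAux.Bdd P τsn := ⟨Cs, ae_of_all _ hCs⟩
  have bY : VimAux.Bdd P Y := ⟨CY, ae_of_all _ hCY⟩
  have bA : VimAux.Bdd P A :=
    ⟨1, ae_of_all _ fun ω => by rcases hA01 ω with h | h <;> rw [h] <;> norm_num⟩
  have bg1 : VimAux.Bdd P g1 := by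
    refine ⟨1, ?_⟩
    filter_upwards [hg1bdd] with ω h
    rw [abs_le]; constructor <;> nlinarith [h.1, h.2, hε, hε']
  have bgn1 : VimAux.Bdd P gn1 := by
    refine ⟨1, ?_⟩
    filter_upwards [hgn1bdd] with ω h
    rw [abs_le]; constructor <;> nlinarith [h.1, h.2, hε, hε']
  have bτs : VimAux.Bdd P (P[fun ω' => Q1 ω' - Q0 ω' | G]) := by
    refine ⟨((C1 + C0).toNNReal : ℝ), ?_⟩
    refine ae_bdd_condExp_of_ae_bdd (ae_of_all _ fun ω => ?_)
    calc |Q1 ω - Q0 ω| = |Q1 ω + -Q0 ω| := by rw [sub_eq_add_neg]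
      _ ≤ |Q1 ω| + |-Q0 ω| := abs_add_le _ _
      _ = |Q1 ω| + |Q0 ω| := by rw [abs_neg]
      _ ≤ C1 + C0 := add_le_add (hC1 ω) (hC0 ω)
      _ ≤ ((C1 + C0).toNNReal : ℝ) := Real.le_coe_toNNReal _
  -- composite Bdd facts
  have bE : VimAux.Bdd P (fun ω => ((Qn1 ω - Qn0 ω) - τsn ω)) := (bQn1.sub bQn0).sub bτsn
  have b2E : VimAux.Bdd P (fun ω => 2 * ((Qn1 ω - Qn0 ω) - τsn ω)) := VimAux.Bdd.const_mul 2 bE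
  have bD : VimAux.Bdd P (fun ω => ((2 * A ω - 1) / (A ω * gn1 ω + (1 - A ω) * (1 - gn1 ω)))) :=
    VimAux.Bdd.div_den hε ((VimAux.Bdd.const_mul 2 bA).sub (bc 1)) hden
  have bQN : VimAux.Bdd P (fun ω => (A ω * Qn1 ω + (1 - A ω) * Qn0 ω)) :=
    (bA.mul bQn1).add (((bc 1).sub bA).mul bQn0)
  have bQB : VimAux.Bdd P (fun ω => (A ω * Q1 ω + (1 - A ω) * Q0 ω)) :=
    (bA.mul bQ1).add (((bc 1).sub bA).mul bQ0)
  have bV : VimAux.Bdd P (fun ω => (2 * ((Qn1 ω - Qn0 ω) - τsn ω) * (Q1 ω - Qn1 ω) / gn1 ω)) :=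
    VimAux.Bdd.div_den hε (b2E.mul (bQ1.sub bQn1)) hd1
  have bW : VimAux.Bdd P (fun ω => (-(2 * ((Qn1 ω - Qn0 ω) - τsn ω) * (Q0 ω - Qn0 ω) / (1 - gn1 ω)))) :=
    (VimAux.Bdd.div_den hε (b2E.mul (bQ0.sub bQn0)) hd2).neg
  have bCC : VimAux.Bdd P (fun ω => (((g1 ω - gn1 ω) / gn1 ω) * (Q1 ω - Qn1 ω) - ((gn1 ω - g1 ω) / (1 - gn1 ω)) * (Q0 ω - Qn0 ω))) :=
    ((VimAux.Bdd.div_den hε (bg1.sub bgn1) hd1).mul (bQ1.sub bQn1)).sub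
      ((VimAux.Bdd.div_den hε (bgn1.sub bg1) hd2).mul (bQ0.sub bQn0))
  -- integrability
  have Int : ∀ f : Ω → ℝ, Measurable[mΩ] f → VimAux.Bdd P f → Integrable f P :=
    fun f hm hb => hb.integrable hm.aestronglyMeasurable
  have i1 : Integrable (fun ω => 2 * ((Qn1 ω - Qn0 ω) - τsn ω) * ((2 * A ω - 1) / (A ω * gn1 ω + (1 - A ω) * (1 - gn1 ω))) * (Y ω - (A ω * Qn1 ω + (1 - A ω) * Qn0 ω))) P :=
    Int _ (m2ED.mul (mY.sub mQN)) ((b2E.mul bD).mul (bY.sub bQN))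
  have i2 : Integrable (fun ω => ((Qn1 ω - Qn0 ω) - τsn ω) ^ 2) P := Int _ mS2 bE.sq
  have i3 : Integrable (fun ω => 2 * ((Qn1 ω - Qn0 ω) - τsn ω) * ((2 * A ω - 1) / (A ω * gn1 ω + (1 - A ω) * (1 - gn1 ω))) * Y ω) P :=
    Int _ (m2ED.mul mY) ((b2E.mul bD).mul bY)
  have i3' : Integrable (fun ω => 2 * ((Qn1 ω - Qn0 ω) - τsn ω) * ((2 * A ω - 1) / (A ω * gn1 ω + (1 - A ω) * (1 - gn1 ω))) * (A ω * Q1 ω + (1 - A ω) * Q0 ω)) P :=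
    Int _ (m2ED.mul mQB) ((b2E.mul bD).mul bQB)
  have i4 : Integrable (fun ω => 2 * ((Qn1 ω - Qn0 ω) - τsn ω) * ((2 * A ω - 1) / (A ω * gn1 ω + (1 - A ω) * (1 - gn1 ω))) * (A ω * Qn1 ω + (1 - A ω) * Qn0 ω)) P :=
    Int _ (m2ED.mul mQN) ((b2E.mul bD).mul bQN)
  have iY : Integrable Y P := Int _ mY bY
  have iA : Integrable A P := Int _ mA bA
  have iw : Integrable (fun ω => (-(2 * ((Qn1 ω - Qn0 ω) - τsn ω) * (Q0 ω - Qn0 ω) / (1 - gn1 ω)))) P := Int _ mW bW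
  have i6 : Integrable (fun ω => ((2 * ((Qn1 ω - Qn0 ω) - τsn ω) * (Q1 ω - Qn1 ω) / gn1 ω) - (-(2 * ((Qn1 ω - Qn0 ω) - τsn ω) * (Q0 ω - Qn0 ω) / (1 - gn1 ω)))) * A ω) P :=
    Int _ (mVW.mul mA) ((bV.sub bW).mul bA)
  have i7 : Integrable (fun ω => ((2 * ((Qn1 ω - Qn0 ω) - τsn ω) * (Q1 ω - Qn1 ω) / gn1 ω) - (-(2 * ((Qn1 ω - Qn0 ω) - τsn ω) * (Q0 ω - Qn0 ω) / (1 - gn1 ω)))) * g1 ω) P :=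
    Int _ (mVW.mul mg1) ((bV.sub bW).mul bg1)
  have iwvg : Integrable (fun ω => (-(2 * ((Qn1 ω - Qn0 ω) - τsn ω) * (Q0 ω - Qn0 ω) / (1 - gn1 ω))) + ((2 * ((Qn1 ω - Qn0 ω) - τsn ω) * (Q1 ω - Qn1 ω) / gn1 ω) - (-(2 * ((Qn1 ω - Qn0 ω) - τsn ω) * (Q0 ω - Qn0 ω) / (1 - gn1 ω)))) * g1 ω) P :=
    Int _ (mW.add (mVW.mul mg1)) (bW.add ((bV.sub bW).mul bg1))
  have i8 : Integrable (fun ω => 2 * ((Qn1 ω - Qn0 ω) - τsn ω) * ((Q1 ω - Q0 ω) - (Qn1 ω - Qn0 ω))) P :=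
    Int _ mS8 (b2E.mul ((bQ1.sub bQ0).sub (bQn1.sub bQn0)))
  have i9 : Integrable (fun ω => 2 * ((Qn1 ω - Qn0 ω) - τsn ω) * (((g1 ω - gn1 ω) / gn1 ω) * (Q1 ω - Qn1 ω) - ((gn1 ω - g1 ω) / (1 - gn1 ω)) * (Q0 ω - Qn0 ω))) P :=
    Int _ ((measurable_const.mul mE).mul mCC) (b2E.mul bCC)
  have i10 : Integrable (fun ω => ((Q1 ω - Q0 ω) - (P[fun ω' => Q1 ω' - Q0 ω' | G]) ω) ^ 2) P :=
    Int _ mS10 ((bQ1.sub bQ0).sub bτs).sq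
  have i11 : Integrable (fun ω => ((P[fun ω' => Q1 ω' - Q0 ω' | G]) ω - τsn ω) ^ 2) P :=
    Int _ mS11 (bτs.sub bτsn).sq
  have i12 : Integrable (fun ω => ((Q1 ω - Q0 ω) - (Qn1 ω - Qn0 ω)) ^ 2) P :=
    Int _ mS12 ((bQ1.sub bQ0).sub (bQn1.sub bQn0)).sq
  have i13 : Integrable (fun ω => ((P[fun ω' => Q1 ω' - Q0 ω' | G]) ω - τsn ω) * (Q1 ω - Q0 ω)) P :=
    Int _ ((mτs.sub mτsn).mul (mQ1.sub mQ0)) ((bτs.sub bτsn).mul (bQ1.sub bQ0))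
  have i14 : Integrable (fun ω => ((P[fun ω' => Q1 ω' - Q0 ω' | G]) ω - τsn ω) * (P[fun ω' => Q1 ω' - Q0 ω' | G]) ω) P :=
    Int _ ((mτs.sub mτsn).mul mτs) ((bτs.sub bτsn).mul bτs)
  have iτ : Integrable (fun ω => Q1 ω - Q0 ω) P := Int _ (mQ1.sub mQ0) (bQ1.sub bQ0)
  have iZ1 : Integrable (fun ω => 2 * ((Qn1 ω - Qn0 ω) - τsn ω) * ((Q1 ω - Q0 ω) - (Qn1 ω - Qn0 ω)) + ((Qn1 ω - Qn0 ω) - τsn ω) ^ 2) P :=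
    Int _ (mS8.add mS2) ((b2E.mul ((bQ1.sub bQ0).sub (bQn1.sub bQn0))).add bE.sq)
  have iZ2 : Integrable
      (fun ω => 2 * ((Qn1 ω - Qn0 ω) - τsn ω) * ((Q1 ω - Q0 ω) - (Qn1 ω - Qn0 ω)) + ((Qn1 ω - Qn0 ω) - τsn ω) ^ 2 + ((Q1 ω - Q0 ω) - (Qn1 ω - Qn0 ω)) ^ 2) P :=
    Int _ ((mS8.add mS2).add mS12)
      (((b2E.mul ((bQ1.sub bQ0).sub (bQn1.sub bQn0))).add bE.sq).add
        ((bQ1.sub bQ0).sub (bQn1.sub bQn0)).sq)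
  have iZ3 : Integrable
      (fun ω => 2 * ((Qn1 ω - Qn0 ω) - τsn ω) * ((Q1 ω - Q0 ω) - (Qn1 ω - Qn0 ω)) + ((Qn1 ω - Qn0 ω) - τsn ω) ^ 2 + ((Q1 ω - Q0 ω) - (Qn1 ω - Qn0 ω)) ^ 2
        - ((P[fun ω' => Q1 ω' - Q0 ω' | G]) ω - τsn ω) ^ 2) P :=
    Int _ (((mS8.add mS2).add mS12).sub mS11)
      ((((b2E.mul ((bQ1.sub bQ0).sub (bQn1.sub bQn0))).add bE.sq).add
        ((bQ1.sub bQ0).sub (bQn1.sub bQn0)).sq).sub (bτs.sub bτsn).sq)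
  -- GW / GAW measurability used for the pull-out property
  have mE_GW : Measurable[GW] (fun ω => ((Qn1 ω - Qn0 ω) - τsn ω)) := (hQn1.sub hQn0).sub (hτsn.mono hG le_rfl)
  have mh_GAW : Measurable[GAW] (fun ω => 2 * ((Qn1 ω - Qn0 ω) - τsn ω) * ((2 * A ω - 1) / (A ω * gn1 ω + (1 - A ω) * (1 - gn1 ω)))) :=
    (measurable_const.mul (mE_GW.mono hGWle le_rfl)).mul
      (((hAGAW.const_mul 2).sub measurable_const).div
        ((hAGAW.mul (hgn1meas.mono hGWle le_rfl)).add
          ((measurable_const.sub hAGAW).mul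
            (measurable_const.sub (hgn1meas.mono hGWle le_rfl)))))
  have mVW_GW : Measurable[GW] (fun ω => (2 * ((Qn1 ω - Qn0 ω) - τsn ω) * (Q1 ω - Qn1 ω) / gn1 ω) - (-(2 * ((Qn1 ω - Qn0 ω) - τsn ω) * (Q0 ω - Qn0 ω) / (1 - gn1 ω)))) :=
    (((measurable_const.mul mE_GW).mul (hQ1.sub hQn1)).div hgn1meas).sub
      ((((measurable_const.mul mE_GW).mul (hQ0.sub hQn0)).div
        (measurable_const.sub hgn1meas)).neg)
  -- Step A : condition on GAW
  have pullY : ∫ ω, 2 * ((Qn1 ω - Qn0 ω) - τsn ω) * ((2 * A ω - 1) / (A ω * gn1 ω + (1 - A ω) * (1 - gn1 ω))) * Y ω ∂P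
      = ∫ ω, 2 * ((Qn1 ω - Qn0 ω) - τsn ω) * ((2 * A ω - 1) / (A ω * gn1 ω + (1 - A ω) * (1 - gn1 ω))) * (P[Y | GAW]) ω ∂P :=
    VimAux.integral_mul_condexp hGAW mh_GAW.stronglyMeasurable i3 iY
  have pullY2 : ∫ ω, 2 * ((Qn1 ω - Qn0 ω) - τsn ω) * ((2 * A ω - 1) / (A ω * gn1 ω + (1 - A ω) * (1 - gn1 ω))) * (P[Y | GAW]) ω ∂P
      = ∫ ω, 2 * ((Qn1 ω - Qn0 ω) - τsn ω) * ((2 * A ω - 1) / (A ω * gn1 ω + (1 - A ω) * (1 - gn1 ω))) * (A ω * Q1 ω + (1 - A ω) * Q0 ω) ∂P := by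
    refine integral_congr_ae ?_
    filter_upwards [hQ] with ω hω
    simp only [hω]
  have stepA : ∫ ω, 2 * ((Qn1 ω - Qn0 ω) - τsn ω) * ((2 * A ω - 1) / (A ω * gn1 ω + (1 - A ω) * (1 - gn1 ω))) * (Y ω - (A ω * Qn1 ω + (1 - A ω) * Qn0 ω)) ∂P
      = ∫ ω, 2 * ((Qn1 ω - Qn0 ω) - τsn ω) * ((2 * A ω - 1) / (A ω * gn1 ω + (1 - A ω) * (1 - gn1 ω))) * ((A ω * Q1 ω + (1 - A ω) * Q0 ω) - (A ω * Qn1 ω + (1 - A ω) * Qn0 ω)) ∂P := by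
    have e1 : ∫ ω, 2 * ((Qn1 ω - Qn0 ω) - τsn ω) * ((2 * A ω - 1) / (A ω * gn1 ω + (1 - A ω) * (1 - gn1 ω))) * (Y ω - (A ω * Qn1 ω + (1 - A ω) * Qn0 ω)) ∂P
        = ∫ ω, (2 * ((Qn1 ω - Qn0 ω) - τsn ω) * ((2 * A ω - 1) / (A ω * gn1 ω + (1 - A ω) * (1 - gn1 ω))) * Y ω - 2 * ((Qn1 ω - Qn0 ω) - τsn ω) * ((2 * A ω - 1) / (A ω * gn1 ω + (1 - A ω) * (1 - gn1 ω))) * (A ω * Qn1 ω + (1 - A ω) * Qn0 ω)) ∂P :=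
      integral_congr_ae (ae_of_all _ fun ω => by ring)
    have e2 : ∫ ω, 2 * ((Qn1 ω - Qn0 ω) - τsn ω) * ((2 * A ω - 1) / (A ω * gn1 ω + (1 - A ω) * (1 - gn1 ω))) * ((A ω * Q1 ω + (1 - A ω) * Q0 ω) - (A ω * Qn1 ω + (1 - A ω) * Qn0 ω)) ∂P
        = ∫ ω, (2 * ((Qn1 ω - Qn0 ω) - τsn ω) * ((2 * A ω - 1) / (A ω * gn1 ω + (1 - A ω) * (1 - gn1 ω))) * (A ω * Q1 ω + (1 - A ω) * Q0 ω) - 2 * ((Qn1 ω - Qn0 ω) - τsn ω) * ((2 * A ω - 1) / (A ω * gn1 ω + (1 - A ω) * (1 - gn1 ω))) * (A ω * Qn1 ω + (1 - A ω) * Qn0 ω)) ∂P :=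
      integral_congr_ae (ae_of_all _ fun ω => by ring)
    rw [e1, e2, integral_sub i3 i4, integral_sub i3' i4, pullY.trans pullY2]
  -- pointwise rewrite using A ∈ {0,1}
  have stepPt : ∫ ω, 2 * ((Qn1 ω - Qn0 ω) - τsn ω) * ((2 * A ω - 1) / (A ω * gn1 ω + (1 - A ω) * (1 - gn1 ω))) * ((A ω * Q1 ω + (1 - A ω) * Q0 ω) - (A ω * Qn1 ω + (1 - A ω) * Qn0 ω)) ∂P
      = ∫ ω, ((-(2 * ((Qn1 ω - Qn0 ω) - τsn ω) * (Q0 ω - Qn0 ω) / (1 - gn1 ω))) + ((2 * ((Qn1 ω - Qn0 ω) - τsn ω) * (Q1 ω - Qn1 ω) / gn1 ω) - (-(2 * ((Qn1 ω - Qn0 ω) - τsn ω) * (Q0 ω - Qn0 ω) / (1 - gn1 ω)))) * A ω) ∂P := by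
    refine integral_congr_ae (ae_of_all _ fun ω => ?_)
    rcases hA01 ω with h | h <;> simp only [h] <;> ring
  -- Step B : condition on GW
  have pullA : ∫ ω, ((2 * ((Qn1 ω - Qn0 ω) - τsn ω) * (Q1 ω - Qn1 ω) / gn1 ω) - (-(2 * ((Qn1 ω - Qn0 ω) - τsn ω) * (Q0 ω - Qn0 ω) / (1 - gn1 ω)))) * A ω ∂P
      = ∫ ω, ((2 * ((Qn1 ω - Qn0 ω) - τsn ω) * (Q1 ω - Qn1 ω) / gn1 ω) - (-(2 * ((Qn1 ω - Qn0 ω) - τsn ω) * (Q0 ω - Qn0 ω) / (1 - gn1 ω)))) * (P[A | GW]) ω ∂P :=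
    VimAux.integral_mul_condexp hGW mVW_GW.stronglyMeasurable i6 iA
  have pullA2 : ∫ ω, ((2 * ((Qn1 ω - Qn0 ω) - τsn ω) * (Q1 ω - Qn1 ω) / gn1 ω) - (-(2 * ((Qn1 ω - Qn0 ω) - τsn ω) * (Q0 ω - Qn0 ω) / (1 - gn1 ω)))) * (P[A | GW]) ω ∂P
      = ∫ ω, ((2 * ((Qn1 ω - Qn0 ω) - τsn ω) * (Q1 ω - Qn1 ω) / gn1 ω) - (-(2 * ((Qn1 ω - Qn0 ω) - τsn ω) * (Q0 ω - Qn0 ω) / (1 - gn1 ω)))) * g1 ω ∂P := by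
    refine integral_congr_ae ?_
    filter_upwards [hg1] with ω hω
    rw [hω]
  have stepB : ∫ ω, ((-(2 * ((Qn1 ω - Qn0 ω) - τsn ω) * (Q0 ω - Qn0 ω) / (1 - gn1 ω))) + ((2 * ((Qn1 ω - Qn0 ω) - τsn ω) * (Q1 ω - Qn1 ω) / gn1 ω) - (-(2 * ((Qn1 ω - Qn0 ω) - τsn ω) * (Q0 ω - Qn0 ω) / (1 - gn1 ω)))) * A ω) ∂P
      = ∫ ω, ((-(2 * ((Qn1 ω - Qn0 ω) - τsn ω) * (Q0 ω - Qn0 ω) / (1 - gn1 ω))) + ((2 * ((Qn1 ω - Qn0 ω) - τsn ω) * (Q1 ω - Qn1 ω) / gn1 ω) - (-(2 * ((Qn1 ω - Qn0 ω) - τsn ω) * (Q0 ω - Qn0 ω) / (1 - gn1 ω)))) * g1 ω) ∂P := by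
    rw [integral_add iw i6, integral_add iw i7, pullA, pullA2]
  -- algebraic identification with the CATE + cross-product decomposition
  have stepCE : ∫ ω, ((-(2 * ((Qn1 ω - Qn0 ω) - τsn ω) * (Q0 ω - Qn0 ω) / (1 - gn1 ω))) + ((2 * ((Qn1 ω - Qn0 ω) - τsn ω) * (Q1 ω - Qn1 ω) / gn1 ω) - (-(2 * ((Qn1 ω - Qn0 ω) - τsn ω) * (Q0 ω - Qn0 ω) / (1 - gn1 ω)))) * g1 ω) ∂P
      = ∫ ω, (2 * ((Qn1 ω - Qn0 ω) - τsn ω) * ((Q1 ω - Q0 ω) - (Qn1 ω - Qn0 ω)) + 2 * ((Qn1 ω - Qn0 ω) - τsn ω) * (((g1 ω - gn1 ω) / gn1 ω) * (Q1 ω - Qn1 ω) - ((gn1 ω - g1 ω) / (1 - gn1 ω)) * (Q0 ω - Qn0 ω))) ∂P := by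
    refine integral_congr_ae ?_
    filter_upwards [hgn1bdd] with ω h
    have h0 : gn1 ω ≠ 0 := ne_of_gt (lt_of_lt_of_le hε h.1)
    have h0' : (1 : ℝ) - gn1 ω ≠ 0 := ne_of_gt (by linarith [h.2])
    field_simp
    ring
  have K1 : ∫ ω, 2 * ((Qn1 ω - Qn0 ω) - τsn ω) * ((2 * A ω - 1) / (A ω * gn1 ω + (1 - A ω) * (1 - gn1 ω))) * (Y ω - (A ω * Qn1 ω + (1 - A ω) * Qn0 ω)) ∂P
      = (∫ ω, 2 * ((Qn1 ω - Qn0 ω) - τsn ω) * ((Q1 ω - Q0 ω) - (Qn1 ω - Qn0 ω)) ∂P) + ∫ ω, 2 * ((Qn1 ω - Qn0 ω) - τsn ω) * (((g1 ω - gn1 ω) / gn1 ω) * (Q1 ω - Qn1 ω) - ((gn1 ω - g1 ω) / (1 - gn1 ω)) * (Q0 ω - Qn0 ω)) ∂P := by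
    rw [stepA, stepPt, stepB, stepCE, integral_add i8 i9]
  -- orthogonality
  have hsmG : StronglyMeasurable[G] (fun ω => (P[fun ω' => Q1 ω' - Q0 ω' | G]) ω - τsn ω) :=
    stronglyMeasurable_condExp.sub hτsn.stronglyMeasurable
  have pullτ : ∫ ω, ((P[fun ω' => Q1 ω' - Q0 ω' | G]) ω - τsn ω) * (Q1 ω - Q0 ω) ∂P
      = ∫ ω, ((P[fun ω' => Q1 ω' - Q0 ω' | G]) ω - τsn ω) * (P[fun ω' => Q1 ω' - Q0 ω' | G]) ω ∂P :=
    VimAux.integral_mul_condexp hGle hsmG i13 iτ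
  have K2 : ∫ ω, (((Q1 ω - Q0 ω) - (P[fun ω' => Q1 ω' - Q0 ω' | G]) ω) * ((P[fun ω' => Q1 ω' - Q0 ω' | G]) ω - τsn ω)) ∂P = 0 := by
    have e1 : ∫ ω, (((Q1 ω - Q0 ω) - (P[fun ω' => Q1 ω' - Q0 ω' | G]) ω) * ((P[fun ω' => Q1 ω' - Q0 ω' | G]) ω - τsn ω)) ∂P
        = ∫ ω, (((P[fun ω' => Q1 ω' - Q0 ω' | G]) ω - τsn ω) * (Q1 ω - Q0 ω) - ((P[fun ω' => Q1 ω' - Q0 ω' | G]) ω - τsn ω) * (P[fun ω' => Q1 ω' - Q0 ω' | G]) ω) ∂P :=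
      integral_congr_ae (ae_of_all _ fun ω => by ring)
    rw [e1, integral_sub i13 i14, pullτ, sub_self]
  -- the exact second-order expansion
  have Zint : ∫ ω, (2 * ((Qn1 ω - Qn0 ω) - τsn ω) * ((Q1 ω - Q0 ω) - (Qn1 ω - Qn0 ω)) + ((Qn1 ω - Qn0 ω) - τsn ω) ^ 2 + ((Q1 ω - Q0 ω) - (Qn1 ω - Qn0 ω)) ^ 2
      - ((P[fun ω' => Q1 ω' - Q0 ω' | G]) ω - τsn ω) ^ 2 - ((Q1 ω - Q0 ω) - (P[fun ω' => Q1 ω' - Q0 ω' | G]) ω) ^ 2) ∂P = 0 := by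
    have e1 : ∫ ω, (2 * ((Qn1 ω - Qn0 ω) - τsn ω) * ((Q1 ω - Q0 ω) - (Qn1 ω - Qn0 ω)) + ((Qn1 ω - Qn0 ω) - τsn ω) ^ 2 + ((Q1 ω - Q0 ω) - (Qn1 ω - Qn0 ω)) ^ 2
        - ((P[fun ω' => Q1 ω' - Q0 ω' | G]) ω - τsn ω) ^ 2 - ((Q1 ω - Q0 ω) - (P[fun ω' => Q1 ω' - Q0 ω' | G]) ω) ^ 2) ∂P
        = ∫ ω, 2 * (((Q1 ω - Q0 ω) - (P[fun ω' => Q1 ω' - Q0 ω' | G]) ω) * ((P[fun ω' => Q1 ω' - Q0 ω' | G]) ω - τsn ω)) ∂P :=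
      integral_congr_ae (ae_of_all _ fun ω => by ring)
    rw [e1, integral_const_mul, K2, mul_zero]
  have s2 : ∫ ω, (2 * ((Qn1 ω - Qn0 ω) - τsn ω) * ((Q1 ω - Q0 ω) - (Qn1 ω - Qn0 ω)) + ((Qn1 ω - Qn0 ω) - τsn ω) ^ 2 + ((Q1 ω - Q0 ω) - (Qn1 ω - Qn0 ω)) ^ 2
      - ((P[fun ω' => Q1 ω' - Q0 ω' | G]) ω - τsn ω) ^ 2 - ((Q1 ω - Q0 ω) - (P[fun ω' => Q1 ω' - Q0 ω' | G]) ω) ^ 2) ∂P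
      = (∫ ω, 2 * ((Qn1 ω - Qn0 ω) - τsn ω) * ((Q1 ω - Q0 ω) - (Qn1 ω - Qn0 ω)) ∂P) + (∫ ω, ((Qn1 ω - Qn0 ω) - τsn ω) ^ 2 ∂P)
        + (∫ ω, ((Q1 ω - Q0 ω) - (Qn1 ω - Qn0 ω)) ^ 2 ∂P) - (∫ ω, ((P[fun ω' => Q1 ω' - Q0 ω' | G]) ω - τsn ω) ^ 2 ∂P)
        - ∫ ω, ((Q1 ω - Q0 ω) - (P[fun ω' => Q1 ω' - Q0 ω' | G]) ω) ^ 2 ∂P := by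
    rw [integral_sub iZ3 i10, integral_sub iZ2 i11, integral_add iZ1 i12,
      integral_add i8 i2]
  -- final assembly
  have L1 : ∫ ω, (2 * ((Qn1 ω - Qn0 ω) - τsn ω) * ((2 * A ω - 1) / (A ω * gn1 ω + (1 - A ω) * (1 - gn1 ω))) * (Y ω - (A ω * Qn1 ω + (1 - A ω) * Qn0 ω)) + ((Qn1 ω - Qn0 ω) - τsn ω) ^ 2) ∂P
      = (∫ ω, 2 * ((Qn1 ω - Qn0 ω) - τsn ω) * ((2 * A ω - 1) / (A ω * gn1 ω + (1 - A ω) * (1 - gn1 ω))) * (Y ω - (A ω * Qn1 ω + (1 - A ω) * Qn0 ω)) ∂P) + ∫ ω, ((Qn1 ω - Qn0 ω) - τsn ω) ^ 2 ∂P :=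
    integral_add i1 i2
  rw [L1, K1]
  rw [s2] at Zint
  linarith [Zint]
end

section
/- (Remainder identity for the variance of treatment effect, equations (2)–(3).) Fix a centering constant c ∈ ℝ (the role played by the empirical mean Pₙτₙ). Then the following exact identity holds: E[ 2(τ_n − c)·((2A−1)/g_n(A))·(Y − Q̄_n(A)) + (τ_n − c)² ] − Var(τ) = (E[τ] − c)² − E[(τ − τ_n)²] + E[ 2(τ_n − c)·( ((g₁ − g_{n,1})/g_{n,1})·(Q̄₁ − Q̄_{n,1}) − ((g_{n,1} − g₁)/(1−g_{n,1}))·(Q̄₀ − Q̄_{n,0}) ) ]. -/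
open MeasureTheory ProbabilityTheory

set_option maxHeartbeats 1000000

lemma vte_abs_mul_le {a b A B : ℝ} (ha : |a| ≤ A) (hb : |b| ≤ B) : |a * b| ≤ A * B := by
  rw [abs_mul]
  exact mul_le_mul ha hb (abs_nonneg _) (le_trans (abs_nonneg _) ha)

lemma vte_abs_div_le {x d e B : ℝ} (hx : |x| ≤ B) (he : 0 < e) (hd : e ≤ d) :
    |x / d| ≤ B / e := by
  rw [abs_div, abs_of_pos (lt_of_lt_of_le he hd)]
  exact div_le_div₀ (le_trans (abs_nonneg _) hx) hx he hd

lemma vte_integrable_of_ae_bound {Ω : Type*} {mΩ : MeasurableSpace Ω} {P : Measure Ω}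
    [IsFiniteMeasure P] {f : Ω → ℝ} (hf : AEStronglyMeasurable f P) {C : ℝ}
    (h : ∀ᵐ ω ∂P, |f ω| ≤ C) : Integrable f P :=
  Integrable.mono' (integrable_const C) hf (by simpa using h)

lemma vte_integral_mul_condexp_eq {Ω : Type*} {mΩ : MeasurableSpace Ω} {P : Measure Ω}
    [IsFiniteMeasure P] {m : MeasurableSpace Ω} (hm : m ≤ mΩ)
    {F g h : Ω → ℝ} (hF : StronglyMeasurable[m] F)
    (hFg : Integrable (fun ω => F ω * g ω) P) (hg : Integrable g P)
    (hgh : P[g|m] =ᵐ[P] h) :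
    ∫ ω, F ω * g ω ∂P = ∫ ω, F ω * h ω ∂P := by
  have h1 : P[F * g|m] =ᵐ[P] fun ω => F ω * h ω := by
    filter_upwards [condExp_mul_of_stronglyMeasurable_left hF (by exact hFg) hg, hgh] with ω hw1 hw2
    simp only [Pi.mul_apply] at hw1
    rw [hw1, hw2]
  calc ∫ ω, F ω * g ω ∂P = ∫ ω, (F * g) ω ∂P := rfl
    _ = ∫ ω, (P[F * g|m]) ω ∂P := (integral_condExp hm (f := F * g)).symm
    _ = ∫ ω, F ω * h ω ∂P := integral_congr_ae h1


/-- remainder identity for the VTE, equations (2)–(3). -/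
theorem vte_remainder_identity
    {Ω : Type*} (GW : MeasurableSpace Ω) (GAW : MeasurableSpace Ω) {mΩ : MeasurableSpace Ω} (P : Measure Ω) [IsProbabilityMeasure P]
    (hGW : GW ≤ mΩ)
    (A : Ω → ℝ) (hA : Measurable A) (hA01 : ∀ ω, A ω = 0 ∨ A ω = 1)
    (hGAW_def : GAW = GW ⊔ MeasurableSpace.comap A inferInstance) (hGAW : GAW ≤ mΩ)
    (Y : Ω → ℝ) (hY : Measurable Y) (hYbdd : ∃ C, ∀ ω, |Y ω| ≤ C)
    (Q1 Q0 : Ω → ℝ) (hQ1 : Measurable[GW] Q1) (hQ0 : Measurable[GW] Q0)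
    (hQ1bdd : ∃ C, ∀ ω, |Q1 ω| ≤ C) (hQ0bdd : ∃ C, ∀ ω, |Q0 ω| ≤ C)
    (hQ : P[Y | GAW] =ᵐ[P] fun ω => A ω * Q1 ω + (1 - A ω) * Q0 ω)
    (g1 : Ω → ℝ) (hg1 : g1 =ᵐ[P] P[A | GW]) (hg1meas : Measurable[GW] g1)
    (ε : ℝ) (hε : 0 < ε) (hε' : ε < 1 / 2)
    (hg1bdd : ∀ᵐ ω ∂P, ε ≤ g1 ω ∧ g1 ω ≤ 1 - ε)
    -- estimated nuisance functions
    (gn1 : Ω → ℝ) (hgn1meas : Measurable[GW] gn1)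
    (hgn1bdd : ∀ᵐ ω ∂P, ε ≤ gn1 ω ∧ gn1 ω ≤ 1 - ε)
    (Qn1 Qn0 : Ω → ℝ) (hQn1 : Measurable[GW] Qn1) (hQn0 : Measurable[GW] Qn0)
    (hQn1bdd : ∃ C, ∀ ω, |Qn1 ω| ≤ C) (hQn0bdd : ∃ C, ∀ ω, |Qn0 ω| ≤ C)
    -- centering constant (the role played by the empirical mean Pₙτₙ)
    (c : ℝ) :
    (∫ ω,
        (2 * ((Qn1 ω - Qn0 ω) - c)
          * ((2 * A ω - 1) / (A ω * gn1 ω + (1 - A ω) * (1 - gn1 ω)))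
          * (Y ω - (A ω * Qn1 ω + (1 - A ω) * Qn0 ω))
        + ((Qn1 ω - Qn0 ω) - c) ^ 2) ∂P)
      - variance (fun ω => Q1 ω - Q0 ω) P
    =
    ((∫ ω, (Q1 ω - Q0 ω) ∂P) - c) ^ 2
      - (∫ ω, ((Q1 ω - Q0 ω) - (Qn1 ω - Qn0 ω)) ^ 2 ∂P)
      + ∫ ω,
          2 * ((Qn1 ω - Qn0 ω) - c)
            * (((g1 ω - gn1 ω) / gn1 ω) * (Q1 ω - Qn1 ω)
              - ((gn1 ω - g1 ω) / (1 - gn1 ω)) * (Q0 ω - Qn0 ω)) ∂P := by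
  obtain ⟨CY, hCY⟩ := hYbdd
  obtain ⟨C1, hC1⟩ := hQ1bdd
  obtain ⟨C0, hC0⟩ := hQ0bdd
  obtain ⟨D1, hD1⟩ := hQn1bdd
  obtain ⟨D0, hD0⟩ := hQn0bdd
  have hle : GW ≤ GAW := by rw [hGAW_def]; exact le_sup_left
  have hAW : Measurable[GAW] A := by
    rw [hGAW_def]; exact measurable_iff_comap_le.mpr le_sup_right
  have mA : Measurable[mΩ] A := hA
  have mY : Measurable[mΩ] Y := hY
  -- ambient measurability
  have mQ1 : Measurable[mΩ] Q1 := hQ1.mono hGW le_rfl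
  have mQ0 : Measurable[mΩ] Q0 := hQ0.mono hGW le_rfl
  have mQn1 : Measurable[mΩ] Qn1 := hQn1.mono hGW le_rfl
  have mQn0 : Measurable[mΩ] Qn0 := hQn0.mono hGW le_rfl
  have mg1 : Measurable[mΩ] g1 := hg1meas.mono hGW le_rfl
  have mgn1 : Measurable[mΩ] gn1 := hgn1meas.mono hGW le_rfl
  -- basic pointwise bounds
  have hTN1 : ∀ ω, |(Qn1 ω - Qn0 ω) - c| ≤ D1 + D0 + |c| := by
    intro ω
    have h1 := abs_le.1 (hD1 ω)
    have h0 := abs_le.1 (hD0 ω)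
    have hc1 := le_abs_self c
    have hc2 := neg_abs_le c
    rw [abs_le]; constructor <;> linarith
  have hTN : ∀ ω, |2 * ((Qn1 ω - Qn0 ω) - c)| ≤ 2 * (D1 + D0 + |c|) := by
    intro ω
    have := abs_le.1 (hTN1 ω)
    rw [abs_le]; constructor <;> linarith
  have hQ1n : ∀ ω, |Q1 ω - Qn1 ω| ≤ C1 + D1 := by
    intro ω
    have h1 := abs_le.1 (hC1 ω); have h2 := abs_le.1 (hD1 ω)
    rw [abs_le]; constructor <;> linarith
  have hQ0n : ∀ ω, |Q0 ω - Qn0 ω| ≤ C0 + D0 := by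
    intro ω
    have h1 := abs_le.1 (hC0 ω); have h2 := abs_le.1 (hD0 ω)
    rw [abs_le]; constructor <;> linarith
  have hτb : ∀ ω, |Q1 ω - Q0 ω| ≤ C1 + C0 := by
    intro ω
    have h1 := abs_le.1 (hC1 ω); have h2 := abs_le.1 (hC0 ω)
    rw [abs_le]; constructor <;> linarith
  have hQAb : ∀ ω, |A ω * Q1 ω + (1 - A ω) * Q0 ω| ≤ C1 + C0 := by
    intro ω
    have h1 := hC1 ω; have h0 := hC0 ω
    have n1 := abs_nonneg (Q1 ω); have n0 := abs_nonneg (Q0 ω)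
    have a1 := abs_le.1 h1; have a0 := abs_le.1 h0
    rcases hA01 ω with h | h <;> rw [h] <;> rw [abs_le] <;> constructor <;>
      [skip; skip; skip; skip] <;> nlinarith
  have hQnAb : ∀ ω, |A ω * Qn1 ω + (1 - A ω) * Qn0 ω| ≤ D1 + D0 := by
    intro ω
    have h1 := hD1 ω; have h0 := hD0 ω
    have n1 := abs_nonneg (Qn1 ω); have n0 := abs_nonneg (Qn0 ω)
    have a1 := abs_le.1 h1; have a0 := abs_le.1 h0
    rcases hA01 ω with h | h <;> rw [h] <;> rw [abs_le] <;> constructor <;>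
      [skip; skip; skip; skip] <;> nlinarith
  have hAb : ∀ ω, |A ω| ≤ 1 := by
    intro ω; rcases hA01 ω with h | h <;> rw [h] <;> norm_num
  -- F bound
  have hFb : ∀ᵐ ω ∂P, |2 * ((Qn1 ω - Qn0 ω) - c) *
      ((2 * A ω - 1) / (A ω * gn1 ω + (1 - A ω) * (1 - gn1 ω)))|
      ≤ 2 * (D1 + D0 + |c|) * (1 / ε) := by
    filter_upwards [hgn1bdd] with ω hgn
    refine vte_abs_mul_le (hTN ω) ?_
    have hd : ε ≤ A ω * gn1 ω + (1 - A ω) * (1 - gn1 ω) := by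
      rcases hA01 ω with h | h <;> rw [h] <;> ring_nf <;> linarith [hgn.1, hgn.2]
    have hnum : |2 * A ω - 1| ≤ 1 := by
      rcases hA01 ω with h | h <;> rw [h] <;> norm_num
    exact vte_abs_div_le hnum hε hd
  -- G bound
  have hGb : ∀ᵐ ω ∂P, |2 * ((Qn1 ω - Qn0 ω) - c) *
      ((Q1 ω - Qn1 ω) / gn1 ω + (Q0 ω - Qn0 ω) / (1 - gn1 ω))|
      ≤ 2 * (D1 + D0 + |c|) * ((C1 + D1) / ε + (C0 + D0) / ε) := by
    filter_upwards [hgn1bdd] with ω hgn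
    refine vte_abs_mul_le (hTN ω) ?_
    have b1 : |(Q1 ω - Qn1 ω) / gn1 ω| ≤ (C1 + D1) / ε :=
      vte_abs_div_le (hQ1n ω) hε hgn.1
    have b2 : |(Q0 ω - Qn0 ω) / (1 - gn1 ω)| ≤ (C0 + D0) / ε :=
      vte_abs_div_le (hQ0n ω) hε (by linarith [hgn.2])
    exact le_trans (abs_add_le _ _) (add_le_add b1 b2)
  -- H bound
  have hHb : ∀ᵐ ω ∂P, |-(2 * ((Qn1 ω - Qn0 ω) - c) * ((Q0 ω - Qn0 ω) / (1 - gn1 ω)))|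
      ≤ 2 * (D1 + D0 + |c|) * ((C0 + D0) / ε) := by
    filter_upwards [hgn1bdd] with ω hgn
    rw [abs_neg]
    exact vte_abs_mul_le (hTN ω) (vte_abs_div_le (hQ0n ω) hε (by linarith [hgn.2]))
  -- R bound
  have hRb : ∀ᵐ ω ∂P, |2 * ((Qn1 ω - Qn0 ω) - c) *
      (((g1 ω - gn1 ω) / gn1 ω) * (Q1 ω - Qn1 ω)
        - ((gn1 ω - g1 ω) / (1 - gn1 ω)) * (Q0 ω - Qn0 ω))|
      ≤ 2 * (D1 + D0 + |c|) * (2 / ε * (C1 + D1) + 2 / ε * (C0 + D0)) := by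
    filter_upwards [hgn1bdd, hg1bdd] with ω hgn hg
    refine vte_abs_mul_le (hTN ω) ?_
    have hdiff : |g1 ω - gn1 ω| ≤ 2 := by
      rw [abs_le]; constructor <;> nlinarith [hgn.1, hgn.2, hg.1, hg.2, hε.le, hε'.le]
    have hdiff' : |gn1 ω - g1 ω| ≤ 2 := by rw [abs_sub_comm]; exact hdiff
    have b1 : |(g1 ω - gn1 ω) / gn1 ω * (Q1 ω - Qn1 ω)| ≤ 2 / ε * (C1 + D1) :=
      vte_abs_mul_le (vte_abs_div_le hdiff hε hgn.1) (hQ1n ω)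
    have b2 : |(gn1 ω - g1 ω) / (1 - gn1 ω) * (Q0 ω - Qn0 ω)| ≤ 2 / ε * (C0 + D0) :=
      vte_abs_mul_le (vte_abs_div_le hdiff' hε (by linarith [hgn.2])) (hQ0n ω)
    exact le_trans (abs_sub _ _) (add_le_add b1 b2)
  -- integrability
  have iY : Integrable Y P :=
    vte_integrable_of_ae_bound (P := P) mY.aestronglyMeasurable (Filter.Eventually.of_forall hCY)
  have iA : Integrable A P :=
    vte_integrable_of_ae_bound (P := P) mA.aestronglyMeasurable (Filter.Eventually.of_forall hAb)
  have mF : Measurable[mΩ] (fun ω => 2 * ((Qn1 ω - Qn0 ω) - c) *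
      ((2 * A ω - 1) / (A ω * gn1 ω + (1 - A ω) * (1 - gn1 ω)))) := by fun_prop
  have mG : Measurable[mΩ] (fun ω => 2 * ((Qn1 ω - Qn0 ω) - c) *
      ((Q1 ω - Qn1 ω) / gn1 ω + (Q0 ω - Qn0 ω) / (1 - gn1 ω))) := by fun_prop
  have mQAf : Measurable[mΩ] (fun ω => A ω * Q1 ω + (1 - A ω) * Q0 ω) := by fun_prop
  have mQnAf : Measurable[mΩ] (fun ω => A ω * Qn1 ω + (1 - A ω) * Qn0 ω) := by fun_prop
  have mTN2 : Measurable[mΩ] (fun ω => ((Qn1 ω - Qn0 ω) - c) ^ 2) := by fun_prop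
  have mH : Measurable[mΩ] (fun ω =>
      -(2 * ((Qn1 ω - Qn0 ω) - c) * ((Q0 ω - Qn0 ω) / (1 - gn1 ω)))) := by fun_prop
  have mR : Measurable[mΩ] (fun ω => 2 * ((Qn1 ω - Qn0 ω) - c) *
      (((g1 ω - gn1 ω) / gn1 ω) * (Q1 ω - Qn1 ω)
        - ((gn1 ω - g1 ω) / (1 - gn1 ω)) * (Q0 ω - Qn0 ω))) := by fun_prop
  have mS : Measurable[mΩ] (fun ω => 2 * ((Qn1 ω - Qn0 ω) - c) *
      ((Q1 ω - Q0 ω) - (Qn1 ω - Qn0 ω))) := by fun_prop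
  have mτ : Measurable[mΩ] (fun ω => Q1 ω - Q0 ω) := by fun_prop
  have mτ2 : Measurable[mΩ] (fun ω => (Q1 ω - Q0 ω) ^ 2) := by fun_prop
  have mτc2 : Measurable[mΩ] (fun ω => ((Q1 ω - Q0 ω) - c) ^ 2) := by fun_prop
  have mττn2 : Measurable[mΩ] (fun ω => ((Q1 ω - Q0 ω) - (Qn1 ω - Qn0 ω)) ^ 2) := by fun_prop
  have iFY : Integrable (fun ω => 2 * ((Qn1 ω - Qn0 ω) - c) *
      ((2 * A ω - 1) / (A ω * gn1 ω + (1 - A ω) * (1 - gn1 ω))) * Y ω) P := by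
    refine vte_integrable_of_ae_bound (P := P) (mF.mul mY).aestronglyMeasurable
      (C := 2 * (D1 + D0 + |c|) * (1 / ε) * CY) ?_
    filter_upwards [hFb] with ω h
    exact vte_abs_mul_le h (hCY ω)
  have iFQA : Integrable (fun ω => 2 * ((Qn1 ω - Qn0 ω) - c) *
      ((2 * A ω - 1) / (A ω * gn1 ω + (1 - A ω) * (1 - gn1 ω))) *
      (A ω * Q1 ω + (1 - A ω) * Q0 ω)) P := by
    refine vte_integrable_of_ae_bound (P := P) (mF.mul mQAf).aestronglyMeasurable
      (C := 2 * (D1 + D0 + |c|) * (1 / ε) * (C1 + C0)) ?_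
    filter_upwards [hFb] with ω h
    exact vte_abs_mul_le h (hQAb ω)
  have iFQnA : Integrable (fun ω => 2 * ((Qn1 ω - Qn0 ω) - c) *
      ((2 * A ω - 1) / (A ω * gn1 ω + (1 - A ω) * (1 - gn1 ω))) *
      (A ω * Qn1 ω + (1 - A ω) * Qn0 ω)) P := by
    refine vte_integrable_of_ae_bound (P := P) (mF.mul mQnAf).aestronglyMeasurable
      (C := 2 * (D1 + D0 + |c|) * (1 / ε) * (D1 + D0)) ?_
    filter_upwards [hFb] with ω h
    exact vte_abs_mul_le h (hQnAb ω)
  have iFYQn : Integrable (fun ω => 2 * ((Qn1 ω - Qn0 ω) - c) *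
      ((2 * A ω - 1) / (A ω * gn1 ω + (1 - A ω) * (1 - gn1 ω))) *
      (Y ω - (A ω * Qn1 ω + (1 - A ω) * Qn0 ω))) P := by
    have : (fun ω => 2 * ((Qn1 ω - Qn0 ω) - c) *
        ((2 * A ω - 1) / (A ω * gn1 ω + (1 - A ω) * (1 - gn1 ω))) *
        (Y ω - (A ω * Qn1 ω + (1 - A ω) * Qn0 ω)))
        = fun ω => 2 * ((Qn1 ω - Qn0 ω) - c) *
        ((2 * A ω - 1) / (A ω * gn1 ω + (1 - A ω) * (1 - gn1 ω))) * Y ω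
        - 2 * ((Qn1 ω - Qn0 ω) - c) *
        ((2 * A ω - 1) / (A ω * gn1 ω + (1 - A ω) * (1 - gn1 ω))) *
        (A ω * Qn1 ω + (1 - A ω) * Qn0 ω) := by
      funext ω; ring
    rw [this]
    exact iFY.sub iFQnA
  have iTN2 : Integrable (fun ω => ((Qn1 ω - Qn0 ω) - c) ^ 2) P := by
    refine vte_integrable_of_ae_bound (P := P) mTN2.aestronglyMeasurable (C := (D1 + D0 + |c|) ^ 2)
      (Filter.Eventually.of_forall fun ω => ?_)
    rw [abs_pow]
    exact pow_le_pow_left₀ (abs_nonneg _) (hTN1 ω) 2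
  have iGA : Integrable (fun ω => 2 * ((Qn1 ω - Qn0 ω) - c) *
      ((Q1 ω - Qn1 ω) / gn1 ω + (Q0 ω - Qn0 ω) / (1 - gn1 ω)) * A ω) P := by
    refine vte_integrable_of_ae_bound (P := P) (mG.mul mA).aestronglyMeasurable
      (C := 2 * (D1 + D0 + |c|) * ((C1 + D1) / ε + (C0 + D0) / ε) * 1) ?_
    filter_upwards [hGb] with ω h
    exact vte_abs_mul_le h (hAb ω)
  have iGg1 : Integrable (fun ω => 2 * ((Qn1 ω - Qn0 ω) - c) *
      ((Q1 ω - Qn1 ω) / gn1 ω + (Q0 ω - Qn0 ω) / (1 - gn1 ω)) * g1 ω) P := by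
    refine vte_integrable_of_ae_bound (P := P) (mG.mul mg1).aestronglyMeasurable
      (C := 2 * (D1 + D0 + |c|) * ((C1 + D1) / ε + (C0 + D0) / ε) * 1) ?_
    filter_upwards [hGb, hg1bdd] with ω h hg
    refine vte_abs_mul_le h ?_
    rw [abs_le]; constructor <;> nlinarith [hg.1, hg.2, hε.le, hε'.le]
  have iH : Integrable (fun ω =>
      -(2 * ((Qn1 ω - Qn0 ω) - c) * ((Q0 ω - Qn0 ω) / (1 - gn1 ω)))) P := by
    exact vte_integrable_of_ae_bound (P := P) mH.aestronglyMeasurable hHb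
  have iR : Integrable (fun ω => 2 * ((Qn1 ω - Qn0 ω) - c) *
      (((g1 ω - gn1 ω) / gn1 ω) * (Q1 ω - Qn1 ω)
        - ((gn1 ω - g1 ω) / (1 - gn1 ω)) * (Q0 ω - Qn0 ω))) P := by
    exact vte_integrable_of_ae_bound (P := P) mR.aestronglyMeasurable hRb
  have iS : Integrable (fun ω => 2 * ((Qn1 ω - Qn0 ω) - c) *
      ((Q1 ω - Q0 ω) - (Qn1 ω - Qn0 ω))) P := by
    refine vte_integrable_of_ae_bound (P := P) mS.aestronglyMeasurable
      (C := 2 * (D1 + D0 + |c|) * (C1 + C0 + D1 + D0))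
      (Filter.Eventually.of_forall fun ω => ?_)
    refine vte_abs_mul_le (hTN ω) ?_
    have h1 := abs_le.1 (hτb ω)
    have h2 := abs_le.1 (hTN1 ω)
    have h3 := abs_le.1 (hD1 ω); have h4 := abs_le.1 (hD0 ω)
    rw [abs_le]; constructor <;> linarith
  have iτ : Integrable (fun ω => Q1 ω - Q0 ω) P :=
    vte_integrable_of_ae_bound (P := P) mτ.aestronglyMeasurable (Filter.Eventually.of_forall hτb)
  have iτ2 : Integrable (fun ω => (Q1 ω - Q0 ω) ^ 2) P := by
    refine vte_integrable_of_ae_bound (P := P) mτ2.aestronglyMeasurable (C := (C1 + C0) ^ 2)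
      (Filter.Eventually.of_forall fun ω => ?_)
    rw [abs_pow]
    exact pow_le_pow_left₀ (abs_nonneg _) (hτb ω) 2
  have iτc2 : Integrable (fun ω => ((Q1 ω - Q0 ω) - c) ^ 2) P := by
    refine vte_integrable_of_ae_bound (P := P) mτc2.aestronglyMeasurable (C := (C1 + C0 + |c|) ^ 2)
      (Filter.Eventually.of_forall fun ω => ?_)
    rw [abs_pow]
    refine pow_le_pow_left₀ (abs_nonneg _) ?_ 2
    have h1 := abs_le.1 (hτb ω)
    have hc1 := le_abs_self c; have hc2 := neg_abs_le c
    rw [abs_le]; constructor <;> linarith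
  have iττn2 : Integrable (fun ω => ((Q1 ω - Q0 ω) - (Qn1 ω - Qn0 ω)) ^ 2) P := by
    refine vte_integrable_of_ae_bound (P := P) mττn2.aestronglyMeasurable (C := (C1 + C0 + D1 + D0) ^ 2)
      (Filter.Eventually.of_forall fun ω => ?_)
    rw [abs_pow]
    refine pow_le_pow_left₀ (abs_nonneg _) ?_ 2
    have h1 := abs_le.1 (hτb ω)
    have h3 := abs_le.1 (hD1 ω); have h4 := abs_le.1 (hD0 ω)
    rw [abs_le]; constructor <;> linarith
  -- strongly measurable (sub-σ-algebra) versions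
  have hFsm : StronglyMeasurable[GAW] (fun ω => 2 * ((Qn1 ω - Qn0 ω) - c) *
      ((2 * A ω - 1) / (A ω * gn1 ω + (1 - A ω) * (1 - gn1 ω)))) := by
    apply Measurable.stronglyMeasurable
    have h1 : Measurable[GAW] Qn1 := hQn1.mono hle le_rfl
    have h0 : Measurable[GAW] Qn0 := hQn0.mono hle le_rfl
    have hg : Measurable[GAW] gn1 := hgn1meas.mono hle le_rfl
    exact (measurable_const.mul ((h1.sub h0).sub measurable_const)).mul
      (((measurable_const.mul hAW).sub measurable_const).div
        ((hAW.mul hg).add ((measurable_const.sub hAW).mul (measurable_const.sub hg))))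
  have hGsm : StronglyMeasurable[GW] (fun ω => 2 * ((Qn1 ω - Qn0 ω) - c) *
      ((Q1 ω - Qn1 ω) / gn1 ω + (Q0 ω - Qn0 ω) / (1 - gn1 ω))) := by
    apply Measurable.stronglyMeasurable
    exact (measurable_const.mul ((hQn1.sub hQn0).sub measurable_const)).mul
      (((hQ1.sub hQn1).div hgn1meas).add
        ((hQ0.sub hQn0).div (measurable_const.sub hgn1meas)))
  -- step 1: replace Y by its conditional expectation
  have eq1 : ∫ ω, 2 * ((Qn1 ω - Qn0 ω) - c) *
        ((2 * A ω - 1) / (A ω * gn1 ω + (1 - A ω) * (1 - gn1 ω))) * Y ω ∂P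
      = ∫ ω, 2 * ((Qn1 ω - Qn0 ω) - c) *
        ((2 * A ω - 1) / (A ω * gn1 ω + (1 - A ω) * (1 - gn1 ω))) *
        (A ω * Q1 ω + (1 - A ω) * Q0 ω) ∂P :=
    vte_integral_mul_condexp_eq hGAW hFsm iFY iY hQ
  -- step 2: replace A by g1
  have eq2 : ∫ ω, 2 * ((Qn1 ω - Qn0 ω) - c) *
        ((Q1 ω - Qn1 ω) / gn1 ω + (Q0 ω - Qn0 ω) / (1 - gn1 ω)) * A ω ∂P
      = ∫ ω, 2 * ((Qn1 ω - Qn0 ω) - c) *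
        ((Q1 ω - Qn1 ω) / gn1 ω + (Q0 ω - Qn0 ω) / (1 - gn1 ω)) * g1 ω ∂P :=
    vte_integral_mul_condexp_eq hGW hGsm iGA iA hg1.symm
  -- pointwise identity 1
  have hpt1 : (fun ω => 2 * ((Qn1 ω - Qn0 ω) - c) *
        ((2 * A ω - 1) / (A ω * gn1 ω + (1 - A ω) * (1 - gn1 ω))) *
        (A ω * Q1 ω + (1 - A ω) * Q0 ω)
      - 2 * ((Qn1 ω - Qn0 ω) - c) *
        ((2 * A ω - 1) / (A ω * gn1 ω + (1 - A ω) * (1 - gn1 ω))) *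
        (A ω * Qn1 ω + (1 - A ω) * Qn0 ω))
      =ᵐ[P] fun ω => 2 * ((Qn1 ω - Qn0 ω) - c) *
        ((Q1 ω - Qn1 ω) / gn1 ω + (Q0 ω - Qn0 ω) / (1 - gn1 ω)) * A ω
      + -(2 * ((Qn1 ω - Qn0 ω) - c) * ((Q0 ω - Qn0 ω) / (1 - gn1 ω))) := by
    filter_upwards [hgn1bdd] with ω hgn
    have h0 : gn1 ω ≠ 0 := (lt_of_lt_of_le hε hgn.1).ne'
    have h1 : (1 : ℝ) - gn1 ω ≠ 0 := by
      have : gn1 ω < 1 := by linarith [hgn.2]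
      intro h; linarith [sub_eq_zero.1 h]
    rcases hA01 ω with h | h <;> rw [h] <;> simp only [zero_mul, one_mul, sub_zero, zero_add, mul_zero, add_zero, mul_one, sub_self] <;> field_simp <;> ring
  -- pointwise identity 2
  have hpt2 : (fun ω => 2 * ((Qn1 ω - Qn0 ω) - c) *
        ((Q1 ω - Qn1 ω) / gn1 ω + (Q0 ω - Qn0 ω) / (1 - gn1 ω)) * g1 ω
      + -(2 * ((Qn1 ω - Qn0 ω) - c) * ((Q0 ω - Qn0 ω) / (1 - gn1 ω))))
      =ᵐ[P] fun ω => 2 * ((Qn1 ω - Qn0 ω) - c) *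
        (((g1 ω - gn1 ω) / gn1 ω) * (Q1 ω - Qn1 ω)
          - ((gn1 ω - g1 ω) / (1 - gn1 ω)) * (Q0 ω - Qn0 ω))
      + 2 * ((Qn1 ω - Qn0 ω) - c) * ((Q1 ω - Q0 ω) - (Qn1 ω - Qn0 ω)) := by
    filter_upwards [hgn1bdd] with ω hgn
    have h0 : gn1 ω ≠ 0 := (lt_of_lt_of_le hε hgn.1).ne'
    have h1 : (1 : ℝ) - gn1 ω ≠ 0 := by
      have : gn1 ω < 1 := by linarith [hgn.2]
      intro h; linarith [sub_eq_zero.1 h]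
    field_simp
    ring
  -- chain of equalities for the cross term
  have eqchain : ∫ ω, 2 * ((Qn1 ω - Qn0 ω) - c) *
        ((2 * A ω - 1) / (A ω * gn1 ω + (1 - A ω) * (1 - gn1 ω))) *
        (Y ω - (A ω * Qn1 ω + (1 - A ω) * Qn0 ω)) ∂P
      = (∫ ω, 2 * ((Qn1 ω - Qn0 ω) - c) *
          (((g1 ω - gn1 ω) / gn1 ω) * (Q1 ω - Qn1 ω)
            - ((gn1 ω - g1 ω) / (1 - gn1 ω)) * (Q0 ω - Qn0 ω)) ∂P)
        + ∫ ω, 2 * ((Qn1 ω - Qn0 ω) - c) *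
            ((Q1 ω - Q0 ω) - (Qn1 ω - Qn0 ω)) ∂P := by
    have e1 : (fun ω => 2 * ((Qn1 ω - Qn0 ω) - c) *
        ((2 * A ω - 1) / (A ω * gn1 ω + (1 - A ω) * (1 - gn1 ω))) *
        (Y ω - (A ω * Qn1 ω + (1 - A ω) * Qn0 ω)))
        = fun ω => 2 * ((Qn1 ω - Qn0 ω) - c) *
        ((2 * A ω - 1) / (A ω * gn1 ω + (1 - A ω) * (1 - gn1 ω))) * Y ω
        - 2 * ((Qn1 ω - Qn0 ω) - c) *
        ((2 * A ω - 1) / (A ω * gn1 ω + (1 - A ω) * (1 - gn1 ω))) *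
        (A ω * Qn1 ω + (1 - A ω) * Qn0 ω) := by funext ω; ring
    rw [e1, integral_sub iFY iFQnA, eq1, ← integral_sub iFQA iFQnA,
      integral_congr_ae hpt1, integral_add iGA iH, eq2, ← integral_add iGg1 iH,
      integral_congr_ae hpt2, integral_add iR iS]
  -- variance expansion
  have hmem : MemLp (fun ω => Q1 ω - Q0 ω) 2 P := by
    refine MemLp.of_bound mτ.aestronglyMeasurable (C1 + C0)
      (Filter.Eventually.of_forall fun ω => ?_)
    rw [Real.norm_eq_abs]; exact hτb ω
  have hVar : variance (fun ω => Q1 ω - Q0 ω) P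
      = (∫ ω, (Q1 ω - Q0 ω) ^ 2 ∂P) - (∫ ω, (Q1 ω - Q0 ω) ∂P) ^ 2 := by
    rw [variance_eq_sub hmem]
    rfl
  -- expansion of ∫ (τ - c)^2
  have hexp : ∫ ω, ((Q1 ω - Q0 ω) - c) ^ 2 ∂P
      = (∫ ω, (Q1 ω - Q0 ω) ^ 2 ∂P) - 2 * c * (∫ ω, (Q1 ω - Q0 ω) ∂P) + c ^ 2 := by
    have e1 : (fun ω => ((Q1 ω - Q0 ω) - c) ^ 2)
        = fun ω => ((Q1 ω - Q0 ω) ^ 2 - 2 * c * (Q1 ω - Q0 ω)) + c ^ 2 := by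
      funext ω; ring
    have i2cτ : Integrable (fun ω => 2 * c * (Q1 ω - Q0 ω)) P := iτ.const_mul (2 * c)
    have isub : Integrable (fun ω => (Q1 ω - Q0 ω) ^ 2 - 2 * c * (Q1 ω - Q0 ω)) P :=
      iτ2.sub i2cτ
    rw [e1, integral_add isub (integrable_const _),
      integral_sub iτ2 i2cτ, integral_const_mul (2 * c) (fun ω => Q1 ω - Q0 ω), integral_const]
    simp
  -- ∫ S + ∫ (τn - c)^2 = ∫ (τ-c)^2 - ∫ (τ-τn)^2
  have hS2 : (∫ ω, 2 * ((Qn1 ω - Qn0 ω) - c) *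
        ((Q1 ω - Q0 ω) - (Qn1 ω - Qn0 ω)) ∂P)
      + (∫ ω, ((Qn1 ω - Qn0 ω) - c) ^ 2 ∂P)
      = (∫ ω, ((Q1 ω - Q0 ω) - c) ^ 2 ∂P)
        - ∫ ω, ((Q1 ω - Q0 ω) - (Qn1 ω - Qn0 ω)) ^ 2 ∂P := by
    rw [← integral_add iS iTN2, ← integral_sub iτc2 iττn2]
    apply integral_congr_ae
    apply Filter.Eventually.of_forall
    intro ω
    ring
  -- final assembly
  have hsplit : ∫ ω,
      (2 * ((Qn1 ω - Qn0 ω) - c)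
        * ((2 * A ω - 1) / (A ω * gn1 ω + (1 - A ω) * (1 - gn1 ω)))
        * (Y ω - (A ω * Qn1 ω + (1 - A ω) * Qn0 ω))
      + ((Qn1 ω - Qn0 ω) - c) ^ 2) ∂P
      = (∫ ω, 2 * ((Qn1 ω - Qn0 ω) - c)
        * ((2 * A ω - 1) / (A ω * gn1 ω + (1 - A ω) * (1 - gn1 ω)))
        * (Y ω - (A ω * Qn1 ω + (1 - A ω) * Qn0 ω)) ∂P)
      + ∫ ω, ((Qn1 ω - Qn0 ω) - c) ^ 2 ∂P := integral_add iFYQn iTN2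
  rw [hexp] at hS2
  rw [hsplit, eqchain, hVar]
  have hsq : ((∫ ω, (Q1 ω - Q0 ω) ∂P) - c) ^ 2
      = (∫ ω, (Q1 ω - Q0 ω) ∂P) ^ 2 - 2 * c * (∫ ω, (Q1 ω - Q0 ω) ∂P) + c ^ 2 := by ring
  linarith [hS2, hsq]
end
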